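/- arXiv:2508.19503 — 3 statements merged into one kernel-verified Lean document; each statement's English description precedes it below -/
import Mathlib

section
/- Let g ≥ 0, r ≥ 1, d ≥ r be integers with (d−r)(r+1) ≥ rg. Then the map 𝐋 ↦ (ψ(B), φ(R)) is a bijection from the set of ALL L-tableaux with parameters (g,r,d) to the set of pairs (P,Q) where P is a semistandard Young tableau with entries in {1,…,r+1} and Q is a standard Young tableau, P and Q have the same shape λ with |λ| = g, λ has height at most r+1, and λ has at least g+r−d columns of height exactly r+1. -/
open scoped Classical

/-! ### Words and conditions (i)-(iii) -/

/-- An `(r+1)`-ary word of length `g`: every letter lies in `{1, …, r+1}`. -/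
def IsWord (g r : ℕ) (w : Fin g → ℕ) : Prop :=
  ∀ j, 1 ≤ w j ∧ w j ≤ r + 1

/-- Condition (i): a collection of at least `g + r - d` pairwise disjoint decreasing
subsequences, each of length `r + 1`. -/
def CondI (g r d : ℕ) (w : Fin g → ℕ) : Prop :=
  ∃ S : Fin (g + r - d) → Fin (r + 1) → Fin g,
    (∀ k, StrictMono (S k) ∧ StrictAnti (w ∘ S k)) ∧
      ∀ k k', k ≠ k' → ∀ a b, S k a ≠ S k' b

/-- Condition (ii): no nondecreasing subsequence of length greater than `d / r`. -/
def CondII (g r d : ℕ) (w : Fin g → ℕ) : Prop :=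
  ∀ m, d / r < m → ¬∃ js : Fin m → Fin g, StrictMono js ∧ Monotone (w ∘ js)

/-- Condition (iii): for every `i ∈ {1, …, r}`, no `(i,i+1)`-subsequence (nondecreasing,
all letters equal to `i` or `i+1`) of length `d / r`. -/
def CondIII (g r d : ℕ) (w : Fin g → ℕ) : Prop :=
  ∀ i, 1 ≤ i → i ≤ r →
    ¬∃ js : Fin (d / r) → Fin g,
        StrictMono js ∧ Monotone (w ∘ js) ∧ ∀ a, w (js a) = i ∨ w (js a) = i + 1

/-- A word satisfies conditions (i)–(iii) for parameters `(g, r, d)`. -/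
def SatisfiesConds (g r d : ℕ) (w : Fin g → ℕ) : Prop :=
  CondI g r d w ∧ CondII g r d w ∧ CondIII g r d w

/-- The number of `(r+1)`-ary words of length `g` satisfying conditions (i)–(iii). -/
noncomputable def wordCount (g r d : ℕ) : ℕ :=
  ((Fintype.piFinset fun _ : Fin g => Finset.Icc 1 (r + 1)).filter fun w =>
      SatisfiesConds g r d w).card

/-! ### Tableaux, encoded as functions `ℕ → ℕ → ℕ` (entry `0` = empty box) -/

/-- A semistandard Young tableau: support is a Young diagram (rows left-justified,
columns top-justified), rows weakly increase, columns strictly increase.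
Entries are positive; the value `0` marks an empty box. -/
def IsSSYT (T : ℕ → ℕ → ℕ) : Prop :=
  (∀ i j, T i (j + 1) ≠ 0 → T i j ≠ 0) ∧
  (∀ i j, T (i + 1) j ≠ 0 → T i j ≠ 0) ∧
  (∀ i j, T i (j + 1) ≠ 0 → T i j ≤ T i (j + 1)) ∧
  (∀ i j, T (i + 1) j ≠ 0 → T i j < T (i + 1) j)

/-- The number of boxes of a tableau. -/
noncomputable def tabSize (T : ℕ → ℕ → ℕ) : ℕ :=
  {p : ℕ × ℕ | T p.1 p.2 ≠ 0}.ncard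

/-- `T` has an `(i,i+1)`-strip of length `ℓ`: one box in each of the first `ℓ` columns
(`s j` = row of the box in column `j`), boxes weakly move up from left to right
(a box in a column strictly to the left never lies in a row strictly above a box in a
column to its right), every box is filled with `i` or `i+1`, and every entry `i` lies
in a column strictly to the left of every entry `i+1`. -/
def HasIStrip (T : ℕ → ℕ → ℕ) (i ℓ : ℕ) : Prop :=
  ∃ s : ℕ → ℕ,
    (∀ j, j < ℓ → T (s j) j ≠ 0) ∧
    (∀ j j', j < j' → j' < ℓ → s j' ≤ s j) ∧
    (∀ j, j < ℓ → T (s j) j = i ∨ T (s j) j = i + 1) ∧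
    (∀ j j', j < ℓ → j' < ℓ → T (s j) j = i → T (s j') j' = i + 1 → j < j')

/-- `SSYT_C(g,r,d)` (with `n = d + d/r + 1 - g`): SSYT of size `(d-r)(r+1) - rg`,
entries in `{1, …, r+1}`, width at most `n - r - 1`, at least `d - g - r` columns of
height `r + 1`, and no `(i,i+1)`-strip of length `n - r - 1` for any `i ∈ {1, …, r}`. -/
def SSYT_C (g r d n : ℕ) : Set (ℕ → ℕ → ℕ) :=
  {T | IsSSYT T ∧ tabSize T = (d - r) * (r + 1) - r * g ∧
    (∀ i j, T i j ≠ 0 → T i j ≤ r + 1) ∧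
    T 0 (n - r - 1) = 0 ∧
    (∀ j, j < d - g - r → T r j ≠ 0) ∧
    ∀ i, 1 ≤ i → i ≤ r → ¬HasIStrip T i (n - r - 1)}

/-- `SSYT_AC(g,r,d)`: SSYT of size `g`, entries in `{1, …, r+1}`, width at most `d / r`,
at least `g + r - d` columns of height `r + 1`, and no `(i,i+1)`-strip of length `d / r`
for any `i ∈ {1, …, r}`. -/
def SSYT_AC (g r d : ℕ) : Set (ℕ → ℕ → ℕ) :=
  {T | IsSSYT T ∧ tabSize T = g ∧
    (∀ i j, T i j ≠ 0 → T i j ≤ r + 1) ∧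
    T 0 (d / r) = 0 ∧
    (∀ j, j < g + r - d → T r j ≠ 0) ∧
    ∀ i, 1 ≤ i → i ≤ r → ¬HasIStrip T i (d / r)}

/-- The width adjustment `ψ`: if `d < g + r`, add `g + r - d` full columns of height
`r + 1` (filled with `1, …, r+1`) on the left; if `d > g + r`, remove the leftmost
`d - g - r` columns; if `d = g + r`, do nothing. -/
def psi (g r d : ℕ) (B : ℕ → ℕ → ℕ) : ℕ → ℕ → ℕ :=
  if d ≤ g + r then
    fun i j =>
      if j < g + r - d then (if i < r + 1 then i + 1 else 0) else B i (j - (g + r - d))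
  else fun i j => B i (j + (d - (g + r)))

/-- A `180°`-rotated and conjugated SSYT of content `(r, …, r)` (each of `1, …, g`
appearing exactly `r` times) and height at most `r + 1`.  The row index `i` runs over
`0, …, r` (row `i` is the row labelled `i + 1`) and the column index `j` counts boxes
of a row starting from the *right* end.  Rows are right-justified and strictly increase
from right to left; columns are bottom-justified and weakly decrease from top to bottom. -/
def IsTrSSYT (g r : ℕ) (R : ℕ → ℕ → ℕ) : Prop :=
  (∀ i j, R i (j + 1) ≠ 0 → R i j ≠ 0) ∧
  (∀ i j, i < r → R i j ≠ 0 → R (i + 1) j ≠ 0) ∧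
  (∀ i j, r + 1 ≤ i → R i j = 0) ∧
  (∀ i j, R i (j + 1) ≠ 0 → R i j < R i (j + 1)) ∧
  (∀ i j, R i j ≠ 0 → R (i + 1) j ≠ 0 → R (i + 1) j ≤ R i j) ∧
  (∀ i j, R i j ≠ 0 → R i j ≤ g) ∧
  (∀ k, 1 ≤ k → k ≤ g → {p : ℕ × ℕ | R p.1 p.2 = k}.ncard = r)

/-- The purple tableau `φ(R)`: for `i = 1, …, g` in order, place a box labelled `i` as
far to the left as possible in the unique row among `1, …, r+1` not containing `i` in
`R`.  Equivalently, the entry of `φ(R)` in row `i`, column `j` is the `(j+1)`-st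
smallest value of `{1, …, g}` not appearing in row `i` of `R`. -/
def phiMap (g r : ℕ) (R : ℕ → ℕ → ℕ) : ℕ → ℕ → ℕ := fun i j =>
  if i < r + 1 then
    (((Finset.Icc 1 g).filter fun k => ∀ l ∈ Finset.range g, R i l ≠ k).sort (· ≤ ·)).getD j 0
  else 0

/-- A standard Young tableau of size `g`: a semistandard tableau with strictly
increasing rows whose entries are exactly `1, …, g`, each appearing once. -/
def IsSYT (g : ℕ) (Q : ℕ → ℕ → ℕ) : Prop :=
  IsSSYT Q ∧ (∀ i j, Q i (j + 1) ≠ 0 → Q i j < Q i (j + 1)) ∧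
  (∀ i j, Q i j ≠ 0 → Q i j ≤ g) ∧
  (∀ k, 1 ≤ k → k ≤ g → {p : ℕ × ℕ | Q p.1 p.2 = k}.ncard = 1)

/-- Two tableaux have the same shape. -/
def SameShape (P Q : ℕ → ℕ → ℕ) : Prop :=
  ∀ i j, P i j ≠ 0 ↔ Q i j ≠ 0

/-- An L-tableau with parameters `(g, r, d)`, encoded as the pair of its blue tableau
`B` (in grid coordinates: row `i ∈ {0, …, r}` from the top, column `j ∈ {0, …, d-r-1}`
from the left) and its red tableau `R` (row `i ∈ {0, …, r}` from the top, column `j`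
counted from the right edge of the grid).  The blue entries lie in `{1, …, r+1}`, are
top- and left-justified and form an SSYT; the red entries lie in `{1, …, g}`, each
appearing exactly `r` times, are bottom- and right-justified and form a rotated,
conjugated SSYT; together they fill the `(r+1) × (d-r)` grid (the grid cell `(i, j)`
is blue if and only if it is not red, i.e. `R i (d - r - 1 - j) = 0`). -/
def IsLTableau (g r d : ℕ) (B R : ℕ → ℕ → ℕ) : Prop :=
  IsSSYT B ∧ (∀ i j, B i j ≠ 0 → B i j ≤ r + 1) ∧
  IsTrSSYT g r R ∧
  (∀ i j, d - r ≤ j → R i j = 0) ∧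
  (∀ i j, r + 1 ≤ i ∨ d - r ≤ j → B i j = 0) ∧
  (∀ i j, i < r + 1 → j < d - r → (B i j ≠ 0 ↔ R i (d - r - 1 - j) = 0))

/-- The set `𝓛ʳ_{g,n,d}` of L-tableaux: the blue tableau is supported in the leftmost
`n - r - 1` columns and has no `(i,i+1)`-strip of length `n - r - 1` for `i ∈ {1, …, r}`. -/
def LSet (g r d n : ℕ) : Set ((ℕ → ℕ → ℕ) × (ℕ → ℕ → ℕ)) :=
  {BR | IsLTableau g r d BR.1 BR.2 ∧
    (∀ i j, n - r - 1 ≤ j → BR.1 i j = 0) ∧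
    ∀ i, 1 ≤ i → i ≤ r → ¬HasIStrip BR.1 i (n - r - 1)}

/-- The set `𝒯ʳ_{g,n,d}` of pairs `(P, Q)` of the same shape with `P ∈ SSYT_AC(g,r,d)`
and `Q` a standard Young tableau. -/
def TSet (g r d : ℕ) : Set ((ℕ → ℕ → ℕ) × (ℕ → ℕ → ℕ)) :=
  {PQ | PQ.1 ∈ SSYT_AC g r d ∧ IsSYT g PQ.2 ∧ SameShape PQ.1 PQ.2}

/-! ### Words as lists, Knuth equivalence, reading words, RSK -/

/-- The list `s` is an `(i,i+1)`-subsequence of length `ℓ` of the word `w`: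
a nondecreasing subsequence all of whose letters equal `i` or `i + 1`. -/
def HasIISubseqL (w : List ℕ) (i ℓ : ℕ) : Prop :=
  ∃ s : List ℕ, s.Sublist w ∧ s.length = ℓ ∧ s.Pairwise (· ≤ ·) ∧ ∀ x ∈ s, x = i ∨ x = i + 1

/-- Elementary Knuth transformations: `…acb… ↦ …cab…` for `a ≤ b < c`, and
`…bac… ↦ …bca…` for `a < b ≤ c`. -/
inductive KnuthStep : List ℕ → List ℕ → Prop
  | swap1 (u v : List ℕ) (a b c : ℕ) (h1 : a ≤ b) (h2 : b < c) :
      KnuthStep (u ++ a :: c :: b :: v) (u ++ c :: a :: b :: v)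
  | swap2 (u v : List ℕ) (a b c : ℕ) (h1 : a < b) (h2 : b ≤ c) :
      KnuthStep (u ++ b :: a :: c :: v) (u ++ b :: c :: a :: v)

/-- Knuth equivalence: the equivalence relation generated by the elementary Knuth
transformations. -/
def KnuthEquiv : List ℕ → List ℕ → Prop :=
  Relation.EqvGen KnuthStep

/-- View a tableau given as a list of rows as a function `ℕ → ℕ → ℕ`. -/
def tabFun (P : List (List ℕ)) : ℕ → ℕ → ℕ := fun i j => (P.getD i []).getD j 0

/-- The reading word of a tableau: concatenate the rows from bottom to top,
each row read from left to right. -/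
def readingWord (P : List (List ℕ)) : List ℕ :=
  P.reverse.flatten

/-- A semistandard Young tableau presented as its list of rows (top to bottom):
rows are nonempty, weakly increasing, with positive entries; row lengths weakly
decrease; columns strictly increase. -/
def IsSSYTRows (P : List (List ℕ)) : Prop :=
  (∀ row ∈ P, row ≠ [] ∧ row.Pairwise (· ≤ ·) ∧ ∀ x ∈ row, 0 < x) ∧
  ∀ i, i + 1 < P.length →
    (P.getD (i + 1) []).length ≤ (P.getD i []).length ∧
    ∀ j, j < (P.getD (i + 1) []).length →
      (P.getD i []).getD j 0 < (P.getD (i + 1) []).getD j 0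

/-- Schensted insertion of `x` into a row: replace the leftmost entry strictly larger
than `x` (returning it as bumped), or append `x` at the end if no such entry exists. -/
def rowInsert (x : ℕ) : List ℕ → List ℕ × Option ℕ
  | [] => ([x], none)
  | y :: ys =>
    if y ≤ x then
      let p := rowInsert x ys
      (y :: p.1, p.2)
    else (x :: ys, some y)

/-- Schensted row insertion of `x` into a tableau (given as its list of rows). -/
def tabInsert (x : ℕ) : List (List ℕ) → List (List ℕ)
  | [] => [[x]]
  | row :: rest =>
    match rowInsert x row with
    | (row', none) => row' :: rest
    | (row', some y) => row' :: tabInsert y rest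

/-- The insertion tableau `P` of a word under the RSK correspondence. -/
def insertTab (w : List ℕ) : List (List ℕ) :=
  w.foldl (fun t x => tabInsert x t) []

/-- The recording tableau `Q` of a word under the RSK correspondence: the entry in box
`(i, j)` is the step at which that box was created during the insertion process. -/
def recQ (w : List ℕ) : ℕ → ℕ → ℕ := fun i j =>
  (((List.range (w.length + 1)).find? fun k =>
      decide (j < ((insertTab (w.take k)).getD i []).length)).getD 0)

/-- The RSK correspondence, sending a word to the pair (insertion tableau, recording
tableau), both viewed as functions `ℕ → ℕ → ℕ`. -/
def RSKmap (w : List ℕ) : (ℕ → ℕ → ℕ) × (ℕ → ℕ → ℕ) :=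
  (tabFun (insertTab w), recQ w)

namespace LProof
noncomputable def enum (S : Finset ℕ) (j : ℕ) : ℕ := (S.sort (· ≤ ·)).getD j 0

lemma enum_eq_zero {S : Finset ℕ} {j : ℕ} (h : S.card ≤ j) : enum S j = 0 := by
  unfold enum; rw [List.getD_eq_default]; rwa [Finset.length_sort]

lemma enum_mem {S : Finset ℕ} {j : ℕ} (h : j < S.card) : enum S j ∈ S := by
  unfold enum
  rw [List.getD_eq_getElem _ _ (by rwa [Finset.length_sort])]
  rw [← Finset.mem_sort (α := ℕ) (· ≤ ·)]
  exact List.getElem_mem _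

lemma enum_lt_enum {S : Finset ℕ} {j j' : ℕ} (h : j < j') (h' : j' < S.card) :
    enum S j < enum S j' := by
  unfold enum
  rw [List.getD_eq_getElem _ _ (by rw [Finset.length_sort]; omega),
    List.getD_eq_getElem _ _ (by rwa [Finset.length_sort])]
  have := List.SortedLT.strictMono_get (Finset.sortedLT_sort S)
    (a := ⟨j, by rw [Finset.length_sort]; omega⟩) (b := ⟨j', by rwa [Finset.length_sort]⟩) h
  simpa using this

lemma enum_ne_zero {S : Finset ℕ} (hpos : ∀ x ∈ S, 0 < x) {j : ℕ} :
    enum S j ≠ 0 ↔ j < S.card := by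
  constructor
  · intro h; by_contra hc; exact h (enum_eq_zero (by omega))
  · intro h; exact (hpos _ (enum_mem h)).ne'

lemma enum_le_enum {S : Finset ℕ} {j j' : ℕ} (h : j ≤ j') (h' : j' < S.card) :
    enum S j ≤ enum S j' := by
  rcases eq_or_lt_of_le h with rfl | h
  · exact le_rfl
  · exact (enum_lt_enum h h').le

lemma enum_surj {S : Finset ℕ} {k : ℕ} (hk : k ∈ S) : ∃ j < S.card, enum S j = k := by
  have : k ∈ S.sort (· ≤ ·) := (Finset.mem_sort _).mpr hk
  obtain ⟨j, hj, he⟩ := List.mem_iff_getElem.mp this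
  refine ⟨j, by rwa [Finset.length_sort] at hj, ?_⟩
  unfold enum; rwa [List.getD_eq_getElem _ _ hj]

lemma enum_inj {S : Finset ℕ} {j j' : ℕ} (hj : j < S.card) (hj' : j' < S.card)
    (h : enum S j = enum S j') : j = j' := by
  rcases lt_trichotomy j j' with hlt | he | hlt
  · exact absurd h (enum_lt_enum hlt hj').ne
  · exact he
  · exact absurd h.symm (enum_lt_enum hlt hj).ne

/-- If `S` has at least `j+1` elements `≤ v`, then the `(j+1)`-st smallest is `≤ v`. -/
lemma enum_le_of_card_filter {S : Finset ℕ} {j v : ℕ}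
    (h : j + 1 ≤ (S.filter (· ≤ v)).card) : enum S j ≤ v := by
  by_contra hc
  push_neg at hc
  have hsub : S.filter (· ≤ v) ⊆ (Finset.range j).image (enum S) := by
    intro x hx
    rw [Finset.mem_filter] at hx
    obtain ⟨j', hj', he⟩ := enum_surj hx.1
    have : j' < j := by
      by_contra hge
      have := enum_le_enum (not_lt.mp hge) hj'
      omega
    exact Finset.mem_image.mpr ⟨j', Finset.mem_range.mpr this, he⟩
  have := Finset.card_le_card hsub
  have := Finset.card_image_le (s := Finset.range j) (f := enum S)
  simp only [Finset.card_range] at this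
  omega

lemma card_filter_enum_ge {S : Finset ℕ} {j : ℕ} (h : j < S.card) :
    j + 1 ≤ (S.filter (· ≤ enum S j)).card := by
  have hsub : (Finset.range (j + 1)).image (enum S) ⊆ S.filter (· ≤ enum S j) := by
    intro x hx
    obtain ⟨j', hj', rfl⟩ := Finset.mem_image.mp hx
    rw [Finset.mem_range] at hj'
    exact Finset.mem_filter.mpr ⟨enum_mem (by omega), enum_le_enum (by omega) h⟩
  have hcard : ((Finset.range (j + 1)).image (enum S)).card = j + 1 := by
    rw [Finset.card_image_of_injOn, Finset.card_range]
    intro a ha b hb hab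
    simp only [Finset.coe_range, Set.mem_Iio] at ha hb
    exact enum_inj (by omega) (by omega) hab
  calc j + 1 = _ := hcard.symm
    _ ≤ _ := Finset.card_le_card hsub

/-- Comparison of enumerations via counting functions. -/
lemma enum_le_enum_of_counts {S S' : Finset ℕ}
    (h : ∀ m, (S'.filter (· ≤ m)).card ≤ (S.filter (· ≤ m)).card) {j : ℕ}
    (hj : j < S'.card) : enum S j ≤ enum S' j :=
  enum_le_of_card_filter (le_trans (card_filter_enum_ge hj) (h _))

/-- Positional description of the counting function. -/
lemma card_filter_eq_pos (S : Finset ℕ) (m : ℕ) :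
    (S.filter (· ≤ m)).card
      = ((Finset.range S.card).filter fun j => enum S j ≤ m).card := by
  symm
  apply Finset.card_bij (fun j _ => enum S j)
  · intro a ha
    rw [Finset.mem_filter, Finset.mem_range] at ha
    exact Finset.mem_filter.mpr ⟨enum_mem ha.1, ha.2⟩
  · intro a ha b hb hab
    rw [Finset.mem_filter, Finset.mem_range] at ha hb
    exact enum_inj ha.1 hb.1 hab
  · intro x hx
    rw [Finset.mem_filter] at hx
    obtain ⟨j, hj, rfl⟩ := enum_surj hx.1
    exact ⟨j, Finset.mem_filter.mpr ⟨Finset.mem_range.mpr hj, hx.2⟩, rfl⟩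

lemma card_filter_sdiff {A S : Finset ℕ} (h : S ⊆ A) (m : ℕ) :
    ((A \ S).filter (· ≤ m)).card = (A.filter (· ≤ m)).card - (S.filter (· ≤ m)).card := by
  have he : (A \ S).filter (· ≤ m) = A.filter (· ≤ m) \ S.filter (· ≤ m) := by
    ext x
    simp only [Finset.mem_filter, Finset.mem_sdiff]
    tauto
  rw [he, Finset.card_sdiff_of_subset (Finset.filter_subset_filter _ h)]


/-- A strictly increasing enumeration is the `enum` of its image. -/
lemma enum_image {n : ℕ} (f : ℕ → ℕ) (hf : ∀ j j', j < j' → j' < n → f j < f j') :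
    ∀ j, enum ((Finset.range n).image f) j = if j < n then f j else 0 := by
  have hinj : Set.InjOn f (Finset.range n) := by
    intro a ha b hb hab
    simp only [Finset.coe_range, Set.mem_Iio] at ha hb
    rcases lt_trichotomy a b with h | h | h
    · exact absurd hab (hf a b h hb).ne
    · exact h
    · exact absurd hab.symm (hf b a h ha).ne
  have hperm : ((Finset.range n).image f).sort (· ≤ ·) = (List.range n).map f := by
    apply List.Perm.eq_of_pairwise' (r := (· ≤ ·))
    rotate_right
    · apply List.perm_of_nodup_nodup_toFinset_eq
      · exact Finset.sort_nodup _ _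
      · rw [List.nodup_map_iff_inj_on (List.nodup_range (n := n))]
        intro a ha b hb
        exact fun h => hinj (by simpa using ha) (by simpa using hb) h
      · ext x
        simp [Finset.mem_sort, List.mem_map]
    · exact Finset.pairwise_sort _ _
    · rw [List.pairwise_iff_getElem]
      intro a b ha hb hab
      simp only [List.getElem_map, List.getElem_range]
      simp only [List.length_map, List.length_range] at ha hb
      exact (hf a b hab hb).le
  intro j
  unfold enum
  rw [hperm]
  by_cases hj : j < n
  · rw [List.getD_eq_getElem _ _ (by simpa using hj)]
    simp [hj]
  · rw [List.getD_eq_default _ _ (by simpa using not_lt.mp hj)]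
    simp [hj]

/-- Rows which are strictly increasing, prefix-supported and bounded by `g`
are enumerations of finsets contained in `{1, …, g}`. -/
lemma row_enum {g : ℕ} (f : ℕ → ℕ) (hpre : ∀ j, f (j + 1) ≠ 0 → f j ≠ 0)
    (hmono : ∀ j, f (j + 1) ≠ 0 → f j < f (j + 1))
    (hub : ∀ j, f j ≠ 0 → f j ≤ g) :
    ∃ S : Finset ℕ, S ⊆ Finset.Icc 1 g ∧ ∀ j, f j = enum S j := by
  have hlow : ∀ j, f j ≠ 0 → j + 1 ≤ f j := by
    intro j
    induction j with
    | zero => omega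
    | succ j ih => intro h; have := hmono j h; have := ih (hpre j h); omega
  have hfg : f g = 0 := by
    by_contra h
    have := hlow g h
    have := hub g h
    omega
  have hex : ∃ j, f j = 0 := ⟨g, hfg⟩
  set n := Nat.find hex with hn
  have hspec : f n = 0 := by rw [hn]; exact Nat.find_spec hex
  have hzero : ∀ j, n ≤ j → f j = 0 := by
    intro j hj
    induction j with
    | zero =>
      have h0 : n = 0 := by omega
      exact h0 ▸ hspec
    | succ j ih =>
      rcases Nat.lt_or_ge n (j+1) with h | h
      · have := ih (by omega)
        by_contra hc
        exact (hpre j hc) this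
      · have h1 : n = j + 1 := by omega
        exact h1 ▸ hspec
  have hnz : ∀ j, j < n → f j ≠ 0 := fun j hj => Nat.find_min hex hj
  have hchain : ∀ j j', j < j' → j' < n → f j < f j' := by
    intro j j' h h'
    induction j' with
    | zero => omega
    | succ j' ih =>
      have h1 := hmono j' (hnz _ h')
      rcases Nat.lt_or_ge j j' with h2 | h2
      · have := ih h2 (by omega); omega
      · have : j = j' := by omega
        rw [this]; exact h1
  refine ⟨(Finset.range n).image f, ?_, ?_⟩
  · intro x hx
    obtain ⟨j, hj, rfl⟩ := Finset.mem_image.mp hx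
    rw [Finset.mem_range] at hj
    have h1 := hlow j (hnz j hj)
    have h2 := hub j (hnz j hj)
    rw [Finset.mem_Icc]; omega
  · intro j
    rw [enum_image f hchain j]
    by_cases hj : j < n
    · simp [hj]
    · simp [hj, hzero j (by omega)]

/-- Row-set form: every row `i < r+1` of `T` is the enumeration of a finset
`S i ⊆ {1, …, g}`, and rows `i ≥ r+1` vanish. -/
structure RowFormW (g r : ℕ) (T : ℕ → ℕ → ℕ) (S : ℕ → Finset ℕ) : Prop where
  sub : ∀ i, S i ⊆ Finset.Icc 1 g
  eq : ∀ i j, i < r + 1 → T i j = enum (S i) j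
  zero : ∀ i j, r + 1 ≤ i → T i j = 0

lemma RowFormW.card_le {g r : ℕ} {T : ℕ → ℕ → ℕ} {S : ℕ → Finset ℕ}
    (h : RowFormW g r T S) (i : ℕ) : (S i).card ≤ g := by
  calc (S i).card ≤ (Finset.Icc 1 g).card := Finset.card_le_card (h.sub i)
    _ = g := by rw [Nat.card_Icc]; omega

lemma RowFormW.pos {g r : ℕ} {T : ℕ → ℕ → ℕ} {S : ℕ → Finset ℕ}
    (h : RowFormW g r T S) (i : ℕ) : ∀ x ∈ S i, 0 < x := by
  intro x hx
  have := h.sub i hx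
  rw [Finset.mem_Icc] at this
  omega

lemma RowFormW.supp {g r : ℕ} {T : ℕ → ℕ → ℕ} {S : ℕ → Finset ℕ}
    (h : RowFormW g r T S) (i j : ℕ) : T i j ≠ 0 ↔ (i < r + 1 ∧ j < (S i).card) := by
  by_cases hi : i < r + 1
  · rw [h.eq i j hi, enum_ne_zero (h.pos i)]
    simp [hi]
  · simp [h.zero i j (by omega), hi]

/-- Build a row form from the row conditions. -/
lemma rowFormW_of_rows {g r : ℕ} {T : ℕ → ℕ → ℕ}
    (hpre : ∀ i j, T i (j + 1) ≠ 0 → T i j ≠ 0)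
    (hmono : ∀ i j, T i (j + 1) ≠ 0 → T i j < T i (j + 1))
    (hub : ∀ i j, T i j ≠ 0 → T i j ≤ g)
    (hzero : ∀ i j, r + 1 ≤ i → T i j = 0) :
    ∃ S : ℕ → Finset ℕ, RowFormW g r T S := by
  have h : ∀ i, ∃ S : Finset ℕ, S ⊆ Finset.Icc 1 g ∧ ∀ j, T i j = enum S j :=
    fun i => row_enum (T i) (hpre i) (hmono i) (hub i)
  choose S h1 h2 using h
  exact ⟨S, ⟨h1, fun i j _ => h2 i j, hzero⟩⟩

/-! ### The complement-row operation -/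

noncomputable def Cset (g : ℕ) (T : ℕ → ℕ → ℕ) (i : ℕ) : Finset ℕ :=
  (Finset.Icc 1 g).filter fun k => ∀ l ∈ Finset.range g, T i l ≠ k

lemma phiMap_eq (g r : ℕ) (T : ℕ → ℕ → ℕ) (i j : ℕ) :
    phiMap g r T i j = if i < r + 1 then enum (Cset g T i) j else 0 := rfl

/-- If row `i` of `T` is `enum S` with `S ⊆ {1,…,g}`, then the complement row set
of row `i` is `{1,…,g} \ S`. -/
lemma Cset_of_enum {g : ℕ} {S : Finset ℕ} (hS : S ⊆ Finset.Icc 1 g)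
    {T : ℕ → ℕ → ℕ} {i : ℕ} (hT : ∀ l, T i l = enum S l) :
    Cset g T i = Finset.Icc 1 g \ S := by
  have hcard : S.card ≤ g := by
    calc S.card ≤ (Finset.Icc 1 g).card := Finset.card_le_card hS
      _ = g := by rw [Nat.card_Icc]; omega
  ext k
  simp only [Cset, Finset.mem_filter, Finset.mem_sdiff, Finset.mem_range]
  constructor
  · rintro ⟨hk, hall⟩
    refine ⟨hk, fun hmem => ?_⟩
    obtain ⟨j, hj, he⟩ := enum_surj hmem
    exact hall j (by omega) (by rw [hT j]; exact he)
  · rintro ⟨hk, hnot⟩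
    refine ⟨hk, fun l _ he => ?_⟩
    rw [hT l] at he
    rcases Nat.lt_or_ge l S.card with h | h
    · exact hnot (he ▸ enum_mem h)
    · rw [enum_eq_zero h] at he
      rw [Finset.mem_Icc] at hk
      omega

lemma RowFormW.phi {g r : ℕ} {T : ℕ → ℕ → ℕ} {S : ℕ → Finset ℕ}
    (h : RowFormW g r T S) :
    RowFormW g r (phiMap g r T) (fun i => Finset.Icc 1 g \ S i) := by
  refine ⟨fun i => Finset.sdiff_subset, fun i j hi => ?_, fun i j hi => ?_⟩
  · rw [phiMap_eq, if_pos hi, Cset_of_enum (h.sub i) (fun l => h.eq i l hi)]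
  · rw [phiMap_eq, if_neg (by omega)]

lemma phi_phi {g r : ℕ} {T : ℕ → ℕ → ℕ} {S : ℕ → Finset ℕ}
    (h : RowFormW g r T S) : phiMap g r (phiMap g r T) = T := by
  funext i j
  by_cases hi : i < r + 1
  · rw [(h.phi).phi.eq i j hi, Finset.sdiff_sdiff_eq_self (h.sub i), h.eq i j hi]
  · rw [(h.phi).phi.zero i j (by omega), h.zero i j (by omega)]

/-! ### Counting -/

lemma card_prod_eq (T : ℕ → ℕ → ℕ) (k m n : ℕ) :
    ((Finset.range m ×ˢ Finset.range n).filter fun p => T p.1 p.2 = k).card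
      = ∑ i ∈ Finset.range m, ((Finset.range n).filter fun j => T i j = k).card := by
  rw [Finset.card_eq_sum_card_fiberwise
    (f := Prod.fst) (t := Finset.range m)
    (by intro x hx
        rw [Finset.mem_coe, Finset.mem_filter, Finset.mem_product] at hx
        exact hx.1.1)]
  refine Finset.sum_congr rfl fun i hi => ?_
  rw [Finset.mem_range] at hi
  apply Finset.card_bij (fun p _ => p.2)
  · intro p hp
    simp only [Finset.mem_filter, Finset.mem_product, Finset.mem_range] at hp ⊢
    obtain ⟨⟨⟨h1, h2⟩, h3⟩, h4⟩ := hp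
    exact ⟨h2, by rw [← h4]; exact h3⟩
  · intro p hp q hq hpq
    simp only [Finset.mem_filter] at hp hq
    exact Prod.ext (hp.2.trans hq.2.symm) hpq
  · intro j hj
    simp only [Finset.mem_filter, Finset.mem_range] at hj
    refine ⟨(i, j), ?_, rfl⟩
    simp only [Finset.mem_filter, Finset.mem_product, Finset.mem_range]
    exact ⟨⟨⟨hi, hj.1⟩, hj.2⟩, trivial⟩

lemma card_prod_ne (T : ℕ → ℕ → ℕ) (m n : ℕ) :
    ((Finset.range m ×ˢ Finset.range n).filter fun p => T p.1 p.2 ≠ 0).card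
      = ∑ i ∈ Finset.range m, ((Finset.range n).filter fun j => T i j ≠ 0).card := by
  rw [Finset.card_eq_sum_card_fiberwise
    (f := Prod.fst) (t := Finset.range m)
    (by intro x hx
        rw [Finset.mem_coe, Finset.mem_filter, Finset.mem_product] at hx
        exact hx.1.1)]
  refine Finset.sum_congr rfl fun i hi => ?_
  rw [Finset.mem_range] at hi
  apply Finset.card_bij (fun p _ => p.2)
  · intro p hp
    simp only [Finset.mem_filter, Finset.mem_product, Finset.mem_range] at hp ⊢
    obtain ⟨⟨⟨h1, h2⟩, h3⟩, h4⟩ := hp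
    exact ⟨h2, by rw [← h4]; exact h3⟩
  · intro p hp q hq hpq
    simp only [Finset.mem_filter] at hp hq
    exact Prod.ext (hp.2.trans hq.2.symm) hpq
  · intro j hj
    simp only [Finset.mem_filter, Finset.mem_range] at hj
    refine ⟨(i, j), ?_, rfl⟩
    simp only [Finset.mem_filter, Finset.mem_product, Finset.mem_range]
    exact ⟨⟨⟨hi, hj.1⟩, hj.2⟩, trivial⟩

/-- The number of occurrences of a positive value `k` in a row-form tableau is the
number of rows whose row set contains `k`. -/
lemma RowFormW.ncard_val {g r : ℕ} {T : ℕ → ℕ → ℕ} {S : ℕ → Finset ℕ}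
    (h : RowFormW g r T S) {k : ℕ} (hk : 1 ≤ k) :
    {p : ℕ × ℕ | T p.1 p.2 = k}.ncard
      = ((Finset.range (r + 1)).filter fun i => k ∈ S i).card := by
  have hset : {p : ℕ × ℕ | T p.1 p.2 = k}
      = ↑(((Finset.range (r + 1)) ×ˢ (Finset.range g)).filter fun p => T p.1 p.2 = k) := by
    ext ⟨i, j⟩
    simp only [Set.mem_setOf_eq, Finset.coe_filter, Finset.mem_product, Finset.mem_range,
      Set.mem_setOf_eq]
    constructor
    · intro he
      have hne : T i j ≠ 0 := by omega
      rw [h.supp] at hne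
      exact ⟨⟨hne.1, by have := h.card_le i; omega⟩, he⟩
    · exact fun hx => hx.2
  rw [hset, Set.ncard_coe_finset, card_prod_eq]
  have hrow : ∀ i ∈ Finset.range (r + 1),
      ((Finset.range g).filter fun j => T i j = k).card = if k ∈ S i then 1 else 0 := by
    intro i hi
    rw [Finset.mem_range] at hi
    by_cases hmem : k ∈ S i
    · rw [if_pos hmem]
      obtain ⟨j0, hj0, he0⟩ := enum_surj hmem
      rw [Finset.card_eq_one]
      refine ⟨j0, ?_⟩
      ext j
      simp only [Finset.mem_filter, Finset.mem_range, Finset.mem_singleton]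
      constructor
      · rintro ⟨hjg, hje⟩
        rw [h.eq i j hi] at hje
        have hjlt : j < (S i).card := by
          rw [← enum_ne_zero (h.pos i)]
          omega
        exact enum_inj hjlt hj0 (hje.trans he0.symm)
      · rintro rfl
        have := h.card_le i
        exact ⟨by omega, by rw [h.eq i j hi]; exact he0⟩
    · rw [if_neg hmem]
      rw [Finset.card_eq_zero, Finset.filter_eq_empty_iff]
      intro j _
      rw [h.eq i j hi]
      intro he
      rcases Nat.lt_or_ge j (S i).card with hlt | hge
      · exact hmem (he ▸ enum_mem hlt)
      · rw [enum_eq_zero hge] at he; omega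
  rw [Finset.sum_congr rfl hrow, ← Finset.card_filter]

/-- Size of a tableau with row lengths `len`. -/
lemma tabSize_eq {r G : ℕ} {T : ℕ → ℕ → ℕ} (len : ℕ → ℕ)
    (hlen : ∀ i j, T i j ≠ 0 ↔ (i < r + 1 ∧ j < len i)) (hG : ∀ i, len i ≤ G) :
    tabSize T = ∑ i ∈ Finset.range (r + 1), len i := by
  have hset : {p : ℕ × ℕ | T p.1 p.2 ≠ 0}
      = ↑(((Finset.range (r + 1)) ×ˢ (Finset.range G)).filter fun p => T p.1 p.2 ≠ 0) := by
    ext ⟨i, j⟩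
    simp only [Set.mem_setOf_eq, Finset.coe_filter, Finset.mem_product, Finset.mem_range,
      Set.mem_setOf_eq]
    constructor
    · intro he
      rw [hlen] at he
      refine ⟨⟨he.1, by have := hG i; omega⟩, ?_⟩
      rw [hlen]; exact he
    · exact fun hx => hx.2
  rw [tabSize, hset, Set.ncard_coe_finset, card_prod_ne]
  apply Finset.sum_congr rfl
  intro i hi
  rw [Finset.mem_range] at hi
  have : (Finset.range G).filter (fun j => T i j ≠ 0) = Finset.range (len i) := by
    ext j
    simp only [Finset.mem_filter, Finset.mem_range]
    rw [hlen]
    have := hG i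
    constructor
    · rintro ⟨_, _, h2⟩; exact h2
    · intro hj; exact ⟨by omega, hi, hj⟩
  rw [this, Finset.card_range]


/-! ### Column lemmas and the width adjustment -/

lemma ssyt_colLB {T : ℕ → ℕ → ℕ} (h : IsSSYT T) : ∀ i j, T i j ≠ 0 → i + 1 ≤ T i j := by
  intro i
  induction i with
  | zero => intro j hj; omega
  | succ i ih =>
    intro j hj
    have h1 := h.2.2.2 i j hj
    have h2 := ih j (h.2.1 i j hj)
    omega

lemma ssyt_colforced {T : ℕ → ℕ → ℕ} {r : ℕ} (h : IsSSYT T)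
    (hub : ∀ i j, T i j ≠ 0 → T i j ≤ r + 1) {j : ℕ} (hbot : T r j ≠ 0) :
    ∀ i, i < r + 1 → T i j = i + 1 := by
  have hnz : ∀ m, T (r - m) j ≠ 0 := by
    intro m
    induction m with
    | zero => simpa using hbot
    | succ m ih =>
      rcases Nat.lt_or_ge m r with hm | hm
      · have he : r - m = (r - (m + 1)) + 1 := by omega
        rw [he] at ih
        exact h.2.1 _ j ih
      · have he : r - (m + 1) = r - m := by omega
        rw [he]; exact ih
  have hub' : ∀ m, m ≤ r → T (r - m) j + m ≤ T r j := by
    intro m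
    induction m with
    | zero => simp
    | succ m ih =>
      intro hm
      have he : r - m = (r - (m + 1)) + 1 := by omega
      have := h.2.2.2 (r - (m + 1)) j (by rw [← he]; exact hnz m)
      rw [← he] at this
      have := ih (by omega)
      omega
  intro i hi
  have h1 := ssyt_colLB h i j (by have := hnz (r - i); rwa [show r - (r - i) = i by omega] at this)
  have h2 := hub' (r - i) (by omega)
  rw [show r - (r - i) = i by omega] at h2
  have h3 := hub r j hbot
  omega

/-- Add `c` full columns of height `r + 1` at the left. -/
def addCols (r c : ℕ) (T : ℕ → ℕ → ℕ) : ℕ → ℕ → ℕ := fun i j =>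
  if j < c then (if i < r + 1 then i + 1 else 0) else T i (j - c)

/-- The inverse width adjustment. -/
noncomputable def psiInv (g r d : ℕ) (P : ℕ → ℕ → ℕ) : ℕ → ℕ → ℕ :=
  if d ≤ g + r then fun i j => P i (j + (g + r - d)) else addCols r (d - (g + r)) P

lemma psi_of_le {g r d : ℕ} (h : d ≤ g + r) (B : ℕ → ℕ → ℕ) :
    psi g r d B = addCols r (g + r - d) B := by
  unfold psi addCols
  rw [if_pos h]

lemma psi_of_gt {g r d : ℕ} (h : ¬d ≤ g + r) (B : ℕ → ℕ → ℕ) :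
    psi g r d B = fun i j => B i (j + (d - (g + r))) := by
  unfold psi
  rw [if_neg h]

lemma psiInv_of_le {g r d : ℕ} (h : d ≤ g + r) (P : ℕ → ℕ → ℕ) :
    psiInv g r d P = fun i j => P i (j + (g + r - d)) := by
  unfold psiInv
  rw [if_pos h]

lemma psiInv_of_gt {g r d : ℕ} (h : ¬d ≤ g + r) (P : ℕ → ℕ → ℕ) :
    psiInv g r d P = addCols r (d - (g + r)) P := by
  unfold psiInv
  rw [if_neg h]

lemma ssyt_shift {T : ℕ → ℕ → ℕ} (c : ℕ) (h : IsSSYT T) :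
    IsSSYT fun i j => T i (j + c) := by
  obtain ⟨h1, h2, h3, h4⟩ := h
  refine ⟨fun i j => ?_, fun i j => h2 i (j + c), fun i j => ?_, fun i j => h4 i (j + c)⟩
  · show T i (j + 1 + c) ≠ 0 → T i (j + c) ≠ 0
    rw [show j + 1 + c = j + c + 1 by omega]
    exact h1 i (j + c)
  · show T i (j + 1 + c) ≠ 0 → T i (j + c) ≤ T i (j + 1 + c)
    rw [show j + 1 + c = j + c + 1 by omega]
    exact h3 i (j + c)

lemma ssyt_addCols {r c : ℕ} {T : ℕ → ℕ → ℕ} (h : IsSSYT T)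
    (hz : ∀ i j, r + 1 ≤ i → T i j = 0) : IsSSYT (addCols r c T) := by
  unfold addCols
  refine ⟨fun i j => ?_, fun i j => ?_, fun i j => ?_, fun i j => ?_⟩
  · intro hne
    beta_reduce at hne ⊢
    by_cases hj : j + 1 < c
    · rw [if_pos hj] at hne
      rw [if_pos (show j < c by omega)]
      exact hne
    · rw [if_neg hj] at hne
      by_cases hj2 : j < c
      · rw [if_pos hj2]
        have hi : i < r + 1 := by
          by_contra hc2
          exact hne (hz i _ (by omega))
        rw [if_pos hi]
        omega
      · rw [if_neg hj2]
        rw [show j + 1 - c = (j - c) + 1 by omega] at hne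
        exact h.1 i (j - c) hne
  · intro hne
    beta_reduce at hne ⊢
    by_cases hj : j < c
    · rw [if_pos hj] at hne ⊢
      have hi : i + 1 < r + 1 := by
        by_contra hc2
        rw [if_neg (show ¬ i + 1 < r + 1 by omega)] at hne
        exact hne rfl
      rw [if_pos (show i < r + 1 by omega)]
      omega
    · rw [if_neg hj] at hne ⊢
      exact h.2.1 i (j - c) hne
  · intro hne
    beta_reduce at hne ⊢
    by_cases hj : j + 1 < c
    · rw [if_pos hj] at hne ⊢
      rw [if_pos (show j < c by omega)]
    · rw [if_neg hj] at hne ⊢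
      by_cases hj2 : j < c
      · rw [if_pos hj2]
        have hi : i < r + 1 := by
          by_contra hc2
          exact hne (hz i _ (by omega))
        rw [if_pos hi]
        rw [show j + 1 - c = 0 by omega] at hne ⊢
        exact ssyt_colLB h i 0 hne
      · rw [if_neg hj2]
        rw [show j + 1 - c = (j - c) + 1 by omega] at hne ⊢
        exact h.2.2.1 i (j - c) hne
  · intro hne
    beta_reduce at hne ⊢
    by_cases hj : j < c
    · rw [if_pos hj] at hne ⊢
      rw [if_pos hj]
      have hi : i + 1 < r + 1 := by
        by_contra hc2
        rw [if_neg (show ¬ i + 1 < r + 1 by omega)] at hne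
        exact hne rfl
      rw [if_pos hi] at hne ⊢
      rw [if_pos (show i < r + 1 by omega)]
      omega
    · rw [if_neg hj] at hne ⊢
      rw [if_neg hj]
      exact h.2.2.2 i (j - c) hne

lemma addCols_le {r c : ℕ} {T : ℕ → ℕ → ℕ}
    (hub : ∀ i j, T i j ≠ 0 → T i j ≤ r + 1) :
    ∀ i j, addCols r c T i j ≠ 0 → addCols r c T i j ≤ r + 1 := by
  intro i j
  unfold addCols
  by_cases hj : j < c
  · rw [if_pos hj]
    by_cases hi : i < r + 1
    · rw [if_pos hi]; omega
    · rw [if_neg hi]; omega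
  · rw [if_neg hj]
    exact hub i (j - c)

/-- `ψ⁻¹ ∘ ψ = id` on suitable tableaux. -/
lemma psiInv_psi {g r d : ℕ} {B : ℕ → ℕ → ℕ} (hB : IsSSYT B)
    (hub : ∀ i j, B i j ≠ 0 → B i j ≤ r + 1)
    (hz : ∀ i j, r + 1 ≤ i → B i j = 0)
    (hfull : ∀ j, j < d - (g + r) → B r j ≠ 0) :
    psiInv g r d (psi g r d B) = B := by
  by_cases hd : d ≤ g + r
  · rw [psi_of_le hd, psiInv_of_le hd]
    funext i j
    beta_reduce
    unfold addCols
    rw [if_neg (by omega)]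
    congr 1
    omega
  · rw [psi_of_gt hd, psiInv_of_gt hd]
    funext i j
    beta_reduce
    unfold addCols
    by_cases hj : j < d - (g + r)
    · rw [if_pos hj]
      by_cases hi : i < r + 1
      · rw [if_pos hi, ssyt_colforced hB hub (hfull j hj) i hi]
      · rw [if_neg hi, hz i j (by omega)]
    · rw [if_neg hj]
      beta_reduce
      congr 1
      omega

/-- `ψ ∘ ψ⁻¹ = id` on suitable tableaux. -/
lemma psi_psiInv {g r d : ℕ} {P : ℕ → ℕ → ℕ} (hP : IsSSYT P)
    (hub : ∀ i j, P i j ≠ 0 → P i j ≤ r + 1)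
    (hz : ∀ i j, r + 1 ≤ i → P i j = 0)
    (hfull : ∀ j, j < g + r - d → P r j ≠ 0) :
    psi g r d (psiInv g r d P) = P := by
  by_cases hd : d ≤ g + r
  · rw [psiInv_of_le hd, psi_of_le hd]
    funext i j
    beta_reduce
    unfold addCols
    by_cases hj : j < g + r - d
    · rw [if_pos hj]
      by_cases hi : i < r + 1
      · rw [if_pos hi, ssyt_colforced hP hub (hfull j hj) i hi]
      · rw [if_neg hi, hz i j (by omega)]
    · rw [if_neg hj]
      beta_reduce
      congr 1
      omega
  · rw [psiInv_of_gt hd, psi_of_gt hd]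
    funext i j
    beta_reduce
    unfold addCols
    rw [if_neg (by omega)]
    congr 1
    omega

/-- Support of `ψ(B)` given the row lengths of `B`. -/
lemma psi_supp {g r d : ℕ} {B : ℕ → ℕ → ℕ} {c : ℕ → ℕ}
    (hc : ∀ i j, B i j ≠ 0 ↔ (i < r + 1 ∧ j < d - r - c i))
    (hcle : ∀ i, c i ≤ d - r) (hcg : ∀ i, c i ≤ g) (hrd : r ≤ d) :
    ∀ i j, psi g r d B i j ≠ 0 ↔ (i < r + 1 ∧ j < g - c i) := by
  intro i j
  by_cases hd : d ≤ g + r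
  · rw [psi_of_le hd, addCols]
    by_cases hj : j < g + r - d
    · rw [if_pos hj]
      by_cases hi : i < r + 1
      · rw [if_pos hi]
        have := hcle i
        simp only [hi, true_and]
        omega
      · rw [if_neg hi]
        simp [hi]
    · rw [if_neg hj, hc i (j - (g + r - d))]
      have := hcle i
      have := hcg i
      constructor
      · rintro ⟨h1, h2⟩; exact ⟨h1, by omega⟩
      · rintro ⟨h1, h2⟩; exact ⟨h1, by omega⟩
  · rw [psi_of_gt hd]
    rw [hc i (j + (d - (g + r)))]
    have := hcle i
    have := hcg i
    constructor
    · rintro ⟨h1, h2⟩; exact ⟨h1, by omega⟩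
    · rintro ⟨h1, h2⟩; exact ⟨h1, by omega⟩


/-! ### Generic facts about row-form tableaux -/

lemma RowFormW.rowPrefix {g r : ℕ} {T : ℕ → ℕ → ℕ} {S : ℕ → Finset ℕ}
    (h : RowFormW g r T S) : ∀ i j, T i (j + 1) ≠ 0 → T i j ≠ 0 := by
  intro i j hne
  rw [h.supp] at hne ⊢
  exact ⟨hne.1, by omega⟩

lemma RowFormW.rowStrict {g r : ℕ} {T : ℕ → ℕ → ℕ} {S : ℕ → Finset ℕ}
    (h : RowFormW g r T S) : ∀ i j, T i (j + 1) ≠ 0 → T i j < T i (j + 1) := by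
  intro i j hne
  have hi : i < r + 1 := by
    by_contra hc
    exact hne (h.zero i (j + 1) (by omega))
  have hlt : j + 1 < (S i).card := by
    have := (h.supp i (j + 1)).mp hne
    exact this.2
  rw [h.eq i j hi, h.eq i (j + 1) hi]
  exact enum_lt_enum (by omega) hlt

lemma RowFormW.le_g {g r : ℕ} {T : ℕ → ℕ → ℕ} {S : ℕ → Finset ℕ}
    (h : RowFormW g r T S) : ∀ i j, T i j ≠ 0 → T i j ≤ g := by
  intro i j hne
  have hs := (h.supp i j).mp hne
  rw [h.eq i j hs.1]
  have := h.sub i (enum_mem hs.2)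
  rw [Finset.mem_Icc] at this
  omega

lemma RowFormW.card_compl {g r : ℕ} {T : ℕ → ℕ → ℕ} {S : ℕ → Finset ℕ}
    (h : RowFormW g r T S) (i : ℕ) : (Finset.Icc 1 g \ S i).card = g - (S i).card := by
  rw [Finset.card_sdiff_of_subset (h.sub i), Nat.card_Icc]
  omega

/-- Number of rows whose complement contains `k`. -/
lemma compl_count {g r : ℕ} {S : ℕ → Finset ℕ} {k : ℕ} (hk : k ∈ Finset.Icc 1 g) :
    ((Finset.range (r + 1)).filter fun i => k ∈ Finset.Icc 1 g \ S i).card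
      = (r + 1) - ((Finset.range (r + 1)).filter fun i => k ∈ S i).card := by
  have he : ((Finset.range (r + 1)).filter fun i => k ∈ Finset.Icc 1 g \ S i)
      = Finset.range (r + 1) \ ((Finset.range (r + 1)).filter fun i => k ∈ S i) := by
    ext i
    simp only [Finset.mem_filter, Finset.mem_sdiff, hk, true_and]
    tauto
  rw [he, Finset.card_sdiff_of_subset (Finset.filter_subset _ _), Finset.card_range]

/-- Counting function comparison for complements. -/
lemma compl_counts {g : ℕ} {S S' : Finset ℕ} (hS : S ⊆ Finset.Icc 1 g)
    (hS' : S' ⊆ Finset.Icc 1 g)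
    (h : ∀ m, (S.filter (· ≤ m)).card ≤ (S'.filter (· ≤ m)).card) (m : ℕ) :
    (((Finset.Icc 1 g \ S').filter (· ≤ m)).card
      ≤ ((Finset.Icc 1 g \ S).filter (· ≤ m)).card) := by
  rw [card_filter_sdiff hS, card_filter_sdiff hS']
  have h1 : (S'.filter (· ≤ m)).card ≤ ((Finset.Icc 1 g).filter (· ≤ m)).card :=
    Finset.card_le_card (Finset.filter_subset_filter _ hS')
  have h2 := h m
  omega

/-- Total count of boxes in a row-form tableau via per-value counts. -/
lemma sum_card_rows {g r : ℕ} {S : ℕ → Finset ℕ} (hsub : ∀ i, S i ⊆ Finset.Icc 1 g)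
    (hcnt : ∀ k, 1 ≤ k → k ≤ g →
      ((Finset.range (r + 1)).filter fun i => k ∈ S i).card = r) :
    ∑ i ∈ Finset.range (r + 1), (S i).card = g * r := by
  have hrow : ∀ i, (S i).card = ∑ k ∈ Finset.Icc 1 g, if k ∈ S i then 1 else 0 := by
    intro i
    rw [← Finset.card_filter]
    congr 1
    rw [Finset.filter_mem_eq_inter, Finset.inter_eq_right.mpr (hsub i)]
  calc ∑ i ∈ Finset.range (r + 1), (S i).card
      = ∑ i ∈ Finset.range (r + 1), ∑ k ∈ Finset.Icc 1 g, if k ∈ S i then 1 else 0 :=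
        Finset.sum_congr rfl fun i _ => hrow i
    _ = ∑ k ∈ Finset.Icc 1 g, ∑ i ∈ Finset.range (r + 1), if k ∈ S i then 1 else 0 :=
        Finset.sum_comm
    _ = ∑ k ∈ Finset.Icc 1 g, r := by
        apply Finset.sum_congr rfl
        intro k hk
        rw [Finset.mem_Icc] at hk
        rw [← Finset.card_filter, hcnt k hk.1 hk.2]
    _ = g * r := by
        rw [Finset.sum_const, Nat.card_Icc, smul_eq_mul, Nat.add_sub_cancel]

/-! ### The purple tableau of a suitable row-form tableau -/

/-- Forward direction: `φ(R)` is a standard Young tableau. -/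
lemma phi_isSYT {g r : ℕ} {R : ℕ → ℕ → ℕ} {S : ℕ → Finset ℕ} (hS : RowFormW g r R S)
    (m1 : ∀ i, i < r → (S i).card ≤ (S (i + 1)).card)
    (m2 : ∀ i m, i < r → ((S i).filter (· ≤ m)).card ≤ ((S (i + 1)).filter (· ≤ m)).card)
    (m3 : ∀ k, 1 ≤ k → k ≤ g →
      ((Finset.range (r + 1)).filter fun i => k ∈ S i).card = r) :
    IsSYT g (phiMap g r R) := by
  have hC := hS.phi
  have hcompl1 : ∀ k, 1 ≤ k → k ≤ g →
      ((Finset.range (r + 1)).filter fun i => k ∈ Finset.Icc 1 g \ S i).card = 1 := by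
    intro k h1 h2
    rw [compl_count (Finset.mem_Icc.mpr ⟨h1, h2⟩), m3 k h1 h2]
    omega
  have hcolne : ∀ i j, phiMap g r R (i + 1) j ≠ 0 → phiMap g r R i j ≠ 0 := by
    intro i j hne
    rw [hC.supp] at hne ⊢
    obtain ⟨hi, hj⟩ := hne
    refine ⟨by omega, ?_⟩
    have c1 : (Finset.Icc 1 g \ S (i + 1)).card = g - (S (i + 1)).card := hS.card_compl (i + 1)
    have c2 : (Finset.Icc 1 g \ S i).card = g - (S i).card := hS.card_compl i
    have hm := m1 i (by omega)
    have := hS.card_le (i + 1)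
    omega
  have hcolstrict : ∀ i j, phiMap g r R (i + 1) j ≠ 0 →
      phiMap g r R i j < phiMap g r R (i + 1) j := by
    intro i j hne
    have hne' := hcolne i j hne
    have hs := (hC.supp (i + 1) j).mp hne
    have hs' := (hC.supp i j).mp hne'
    have hi : i < r := by omega
    have hle : phiMap g r R i j ≤ phiMap g r R (i + 1) j := by
      rw [hC.eq i j hs'.1, hC.eq (i + 1) j hs.1]
      exact enum_le_enum_of_counts
        (fun m => compl_counts (hS.sub i) (hS.sub (i + 1)) (fun m' => m2 i m' hi) m) hs.2
    rcases lt_or_eq_of_le hle with h | h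
    · exact h
    · exfalso
      have hm1 : phiMap g r R i j ∈ Finset.Icc 1 g \ S i := by
        rw [hC.eq i j hs'.1]
        exact enum_mem hs'.2
      have hm2 : phiMap g r R (i + 1) j ∈ Finset.Icc 1 g \ S (i + 1) := by
        rw [hC.eq (i + 1) j hs.1]
        exact enum_mem hs.2
      rw [← h] at hm2
      set k := phiMap g r R i j with hk
      have hkIcc : k ∈ Finset.Icc 1 g := (Finset.mem_sdiff.mp hm1).1
      rw [Finset.mem_Icc] at hkIcc
      have hsub : {i, i + 1} ⊆ (Finset.range (r + 1)).filter
          fun i' => k ∈ Finset.Icc 1 g \ S i' := by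
        intro x hx
        rw [Finset.mem_insert, Finset.mem_singleton] at hx
        rcases hx with rfl | rfl
        · exact Finset.mem_filter.mpr ⟨Finset.mem_range.mpr (by omega), hm1⟩
        · exact Finset.mem_filter.mpr ⟨Finset.mem_range.mpr (by omega), hm2⟩
      have hcard2 : ({i, i + 1} : Finset ℕ).card = 2 := by
        rw [Finset.card_insert_of_notMem (by simp), Finset.card_singleton]
      have := Finset.card_le_card hsub
      rw [hcard2, hcompl1 k hkIcc.1 hkIcc.2] at this
      omega
  refine ⟨⟨hC.rowPrefix, hcolne, fun i j hne => (hC.rowStrict i j hne).le, hcolstrict⟩,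
    hC.rowStrict, hC.le_g, ?_⟩
  intro k h1 h2
  rw [hC.ncard_val h1]
  exact hcompl1 k h1 h2

/-- Backward direction: `φ(Q)` is a rotated conjugated SSYT of content `(r,…,r)`. -/
lemma phi_isTr {g r d : ℕ} (hrd : r ≤ d) {Q : ℕ → ℕ → ℕ} {S : ℕ → Finset ℕ}
    (hS : RowFormW g r Q S)
    (m1 : ∀ i, i < r → (S (i + 1)).card ≤ (S i).card)
    (m2 : ∀ i m, i < r → ((S (i + 1)).filter (· ≤ m)).card ≤ ((S i).filter (· ≤ m)).card)
    (m3 : ∀ k, 1 ≤ k → k ≤ g →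
      ((Finset.range (r + 1)).filter fun i => k ∈ S i).card = 1)
    (m4 : ∀ i, i < r + 1 → g + r - d ≤ (S i).card) :
    IsTrSSYT g r (phiMap g r Q) ∧ (∀ i j, d - r ≤ j → phiMap g r Q i j = 0) := by
  have hC := hS.phi
  have hzero : ∀ i j, d - r ≤ j → phiMap g r Q i j = 0 := by
    intro i j hj
    by_cases hi : i < r + 1
    · rw [hC.eq i j hi]
      apply enum_eq_zero
      have := hS.card_compl i
      have := m4 i hi
      have := hS.card_le i
      omega
    · exact hC.zero i j (by omega)
  refine ⟨⟨hC.rowPrefix, ?_, fun i j hi => hC.zero i j hi, hC.rowStrict, ?_, hC.le_g, ?_⟩,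
    hzero⟩
  · -- bottom-justified
    intro i j hi hne
    rw [hC.supp] at hne ⊢
    refine ⟨by omega, ?_⟩
    have c1 := hS.card_compl (i + 1)
    have c2 := hS.card_compl i
    have := m1 i hi
    have := hS.card_le i
    omega
  · -- columns weakly decrease downwards
    intro i j hne hne'
    have hs := (hC.supp i j).mp hne
    have hs' := (hC.supp (i + 1) j).mp hne'
    have hi : i < r := by omega
    rw [hC.eq i j hs.1, hC.eq (i + 1) j hs'.1]
    exact enum_le_enum_of_counts
      (fun m => compl_counts (hS.sub (i + 1)) (hS.sub i) (fun m' => m2 i m' hi) m) hs.2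
  · -- content
    intro k h1 h2
    rw [hC.ncard_val h1, compl_count (Finset.mem_Icc.mpr ⟨h1, h2⟩), m3 k h1 h2]
    omega


/-! ### The forward direction -/

lemma forward_full {g r d : ℕ} (hd : r ≤ d) {B R : ℕ → ℕ → ℕ}
    (hL : IsLTableau g r d B R) :
    (IsSSYT (psi g r d B) ∧ (∀ i j, psi g r d B i j ≠ 0 → psi g r d B i j ≤ r + 1) ∧
      IsSYT g (phiMap g r R) ∧ SameShape (psi g r d B) (phiMap g r R) ∧
      tabSize (psi g r d B) = g ∧ (∀ i j, r + 1 ≤ i → psi g r d B i j = 0) ∧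
      (∀ j, j < g + r - d → psi g r d B r j ≠ 0)) ∧
    psiInv g r d (psi g r d B) = B ∧ phiMap g r (phiMap g r R) = R := by
  obtain ⟨hB, hBle, hRt, hRz, hBz, hcomp⟩ := hL
  obtain ⟨hRt1, hRt2, hRt3, hRt4, hRt5, hRt6, hRt7⟩ := hRt
  obtain ⟨S, hS⟩ := rowFormW_of_rows hRt1 hRt4 hRt6 hRt3
  set cfun : ℕ → ℕ := fun i => if i < r + 1 then (S i).card else 0 with hcfun
  have hBz' : ∀ i j, r + 1 ≤ i → B i j = 0 := fun i j hi => hBz i j (Or.inl hi)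
  have hcg : ∀ i, cfun i ≤ g := by
    intro i
    simp only [hcfun]
    by_cases hi : i < r + 1
    · rw [if_pos hi]; exact hS.card_le i
    · rw [if_neg hi]; omega
  have hcle : ∀ i, cfun i ≤ d - r := by
    intro i
    simp only [hcfun]
    by_cases hi : i < r + 1
    · rw [if_pos hi]
      by_contra hc
      push_neg at hc
      have hne : R i (d - r) ≠ 0 := by
        rw [hS.supp]
        exact ⟨hi, by omega⟩
      exact hne (hRz i (d - r) le_rfl)
    · rw [if_neg hi]; omega
  have hccard : ∀ i, i < r + 1 → cfun i = (S i).card := by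
    intro i hi; simp only [hcfun]; simp [hi]
  have hBsupp : ∀ i j, B i j ≠ 0 ↔ (i < r + 1 ∧ j < d - r - cfun i) := by
    intro i j
    by_cases hi : i < r + 1
    · by_cases hj : j < d - r
      · rw [hcomp i j hi hj]
        have hsupp := hS.supp i (d - r - 1 - j)
        have hle := hcle i
        have hcc := hccard i hi
        constructor
        · intro h0
          refine ⟨hi, ?_⟩
          by_contra hc
          push_neg at hc
          have : R i (d - r - 1 - j) ≠ 0 := by
            rw [hsupp]
            exact ⟨hi, by omega⟩
          exact this h0
        · rintro ⟨-, h2⟩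
          by_contra hc
          have := (hsupp.mp hc).2
          omega
      · have h0 : B i j = 0 := hBz i j (Or.inr (by omega))
        constructor
        · intro h; exact absurd h0 h
        · rintro ⟨-, h2⟩
          have := hcle i
          exact absurd h2 (by omega)
    · simp [hBz' i j (by omega), hi]
  have hpsisupp := psi_supp hBsupp hcle hcg hd
  -- row-set comparison facts
  have m1 : ∀ i, i < r → (S i).card ≤ (S (i + 1)).card := by
    intro i hi
    by_contra hc
    push_neg at hc
    have hne : R i (S (i + 1)).card ≠ 0 := by
      rw [hS.supp]
      exact ⟨by omega, hc⟩
    have hne' := hRt2 i _ hi hne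
    rw [hS.supp] at hne'
    omega
  have m2 : ∀ i m, i < r →
      ((S i).filter (· ≤ m)).card ≤ ((S (i + 1)).filter (· ≤ m)).card := by
    intro i m hi
    rw [card_filter_eq_pos, card_filter_eq_pos]
    apply Finset.card_le_card
    intro j hj
    rw [Finset.mem_filter, Finset.mem_range] at hj ⊢
    have hne : R i j ≠ 0 := by
      rw [hS.supp]; exact ⟨by omega, hj.1⟩
    have hne' : R (i + 1) j ≠ 0 := hRt2 i j hi hne
    have hlt' : j < (S (i + 1)).card := ((hS.supp (i + 1) j).mp hne').2
    refine ⟨hlt', ?_⟩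
    have h5 := hRt5 i j hne hne'
    rw [hS.eq i j (by omega), hS.eq (i + 1) j (by omega)] at h5
    omega
  have m3 : ∀ k, 1 ≤ k → k ≤ g →
      ((Finset.range (r + 1)).filter fun i => k ∈ S i).card = r := by
    intro k h1 h2
    rw [← hS.ncard_val h1]
    exact hRt7 k h1 h2
  have hSYT := phi_isSYT hS m1 m2 m3
  have hC := hS.phi
  have hshape : SameShape (psi g r d B) (phiMap g r R) := by
    intro i j
    rw [hpsisupp i j, hC.supp i j]
    constructor
    · rintro ⟨h1, h2⟩
      refine ⟨h1, ?_⟩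
      rw [hS.card_compl i, ← hccard i h1]
      exact h2
    · rintro ⟨h1, h2⟩
      refine ⟨h1, ?_⟩
      rw [hS.card_compl i, ← hccard i h1] at h2
      exact h2
  have hsum := sum_card_rows hS.sub m3
  have hsum' : ∑ i ∈ Finset.range (r + 1), cfun i = g * r := by
    rw [← hsum]
    apply Finset.sum_congr rfl
    intro i hi
    exact hccard i (Finset.mem_range.mp hi)
  have htab : tabSize (psi g r d B) = g := by
    rw [tabSize_eq (r := r) (G := g) (fun i => g - cfun i) hpsisupp (fun i => Nat.sub_le g (cfun i))]
    have h1 : ∑ i ∈ Finset.range (r + 1), (g - cfun i)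
        + ∑ i ∈ Finset.range (r + 1), cfun i
        = ∑ i ∈ Finset.range (r + 1), g := by
      rw [← Finset.sum_add_distrib]
      apply Finset.sum_congr rfl
      intro i _
      have := hcg i
      omega
    rw [Finset.sum_const, Finset.card_range, smul_eq_mul] at h1
    have h2 : (r + 1) * g = r * g + g := by ring
    have h3 : g * r = r * g := by ring
    omega
  have hheight : ∀ i j, r + 1 ≤ i → psi g r d B i j = 0 := by
    intro i j hi
    by_contra hc
    have := (hpsisupp i j).mp hc
    omega
  have hfull : ∀ j, j < g + r - d → psi g r d B r j ≠ 0 := by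
    intro j hj
    rw [hpsisupp]
    refine ⟨by omega, ?_⟩
    have := hcle r
    omega
  have hpsiSSYT : IsSSYT (psi g r d B) := by
    by_cases hdle : d ≤ g + r
    · rw [psi_of_le hdle]; exact ssyt_addCols hB hBz'
    · rw [psi_of_gt hdle]; exact ssyt_shift _ hB
  have hpsile : ∀ i j, psi g r d B i j ≠ 0 → psi g r d B i j ≤ r + 1 := by
    by_cases hdle : d ≤ g + r
    · rw [psi_of_le hdle]; exact addCols_le hBle
    · rw [psi_of_gt hdle]; exact fun i j => hBle i _
  have hBfull : ∀ j, j < d - (g + r) → B r j ≠ 0 := by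
    intro j hj
    rw [hBsupp]
    refine ⟨by omega, ?_⟩
    have := hcg r
    omega
  exact ⟨⟨hpsiSSYT, hpsile, hSYT, hshape, htab, hheight, hfull⟩,
    psiInv_psi hB hBle hBz' hBfull, phi_phi hS⟩

/-! ### The backward direction -/

/-- Support of `ψ⁻¹(P)` given the row lengths of `P`. -/
lemma psiInv_supp {g r d : ℕ} {P : ℕ → ℕ → ℕ} {lam : ℕ → ℕ}
    (hc : ∀ i j, P i j ≠ 0 ↔ (i < r + 1 ∧ j < lam i))
    (hlg : ∀ i, lam i ≤ g) (hge : ∀ i, i < r + 1 → g + r - d ≤ lam i) (hrd : r ≤ d) :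
    ∀ i j, psiInv g r d P i j ≠ 0 ↔ (i < r + 1 ∧ j < d - r - (g - lam i)) := by
  intro i j
  by_cases hdle : d ≤ g + r
  · rw [psiInv_of_le hdle]
    beta_reduce
    rw [hc i (j + (g + r - d))]
    have h1 := hlg i
    constructor
    · rintro ⟨ha, hb⟩
      have := hge i ha
      exact ⟨ha, by omega⟩
    · rintro ⟨ha, hb⟩
      have := hge i ha
      exact ⟨ha, by omega⟩
  · rw [psiInv_of_gt hdle, addCols]
    beta_reduce
    by_cases hj : j < d - (g + r)
    · rw [if_pos hj]
      by_cases hi : i < r + 1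
      · rw [if_pos hi]
        have h1 := hlg i
        simp only [hi, true_and]
        omega
      · rw [if_neg hi]
        simp [hi]
    · rw [if_neg hj, hc i (j - (d - (g + r)))]
      have h1 := hlg i
      constructor
      · rintro ⟨ha, hb⟩
        exact ⟨ha, by omega⟩
      · rintro ⟨ha, hb⟩
        exact ⟨ha, by omega⟩

lemma backward_full {g r d : ℕ} (hd : r ≤ d) {P Q : ℕ → ℕ → ℕ}
    (hP : IsSSYT P) (hPle : ∀ i j, P i j ≠ 0 → P i j ≤ r + 1)
    (hQ : IsSYT g Q) (hsh : SameShape P Q)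
    (hhz : ∀ i j, r + 1 ≤ i → P i j = 0)
    (hfull : ∀ j, j < g + r - d → P r j ≠ 0) :
    IsLTableau g r d (psiInv g r d P) (phiMap g r Q) ∧
      psi g r d (psiInv g r d P) = P ∧ phiMap g r (phiMap g r Q) = Q := by
  obtain ⟨hQs, hQrow, hQle, hQcnt⟩ := hQ
  have hQz : ∀ i j, r + 1 ≤ i → Q i j = 0 := by
    intro i j hi
    by_contra hc
    exact (hsh i j).mpr hc (hhz i j hi)
  obtain ⟨SQ, hSQ⟩ := rowFormW_of_rows hQs.1 hQrow hQle hQz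
  set lam : ℕ → ℕ := fun i => if i < r + 1 then (SQ i).card else 0 with hlam
  have hlamc : ∀ i, i < r + 1 → lam i = (SQ i).card := by
    intro i hi; simp only [hlam]; simp [hi]
  have hlg : ∀ i, lam i ≤ g := by
    intro i
    simp only [hlam]
    by_cases hi : i < r + 1
    · rw [if_pos hi]; exact hSQ.card_le i
    · rw [if_neg hi]; omega
  have hPsupp : ∀ i j, P i j ≠ 0 ↔ (i < r + 1 ∧ j < lam i) := by
    intro i j
    rw [hsh i j, hSQ.supp i j]
    by_cases hi : i < r + 1
    · rw [hlamc i hi]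
    · simp [hi]
  have hPfullcol : ∀ i j, i < r + 1 → j < g + r - d → P i j ≠ 0 := by
    intro i j hi hj
    have key : ∀ m, P (r - m) j ≠ 0 := by
      intro m
      induction m with
      | zero => simpa using hfull j hj
      | succ m ih =>
        rcases Nat.lt_or_ge m r with hm | hm
        · have he : r - m = (r - (m + 1)) + 1 := by omega
          rw [he] at ih
          exact hP.2.1 _ j ih
        · have he : r - (m + 1) = r - m := by omega
          rw [he]; exact ih
    have := key (r - i)
    rwa [show r - (r - i) = i by omega] at this
  have m4 : ∀ i, i < r + 1 → g + r - d ≤ (SQ i).card := by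
    intro i hi
    by_contra hc
    push_neg at hc
    have hne : P i (SQ i).card ≠ 0 := hPfullcol i _ hi (by omega)
    rw [hPsupp, hlamc i hi] at hne
    omega
  have m1 : ∀ i, i < r → (SQ (i + 1)).card ≤ (SQ i).card := by
    intro i hi
    by_contra hc
    push_neg at hc
    have hne : Q (i + 1) (SQ i).card ≠ 0 := by
      rw [hSQ.supp]
      exact ⟨by omega, hc⟩
    have := hQs.2.1 i _ hne
    rw [hSQ.supp] at this
    omega
  have m2 : ∀ i m, i < r →
      ((SQ (i + 1)).filter (· ≤ m)).card ≤ ((SQ i).filter (· ≤ m)).card := by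
    intro i m hi
    rw [card_filter_eq_pos, card_filter_eq_pos]
    apply Finset.card_le_card
    intro j hj
    rw [Finset.mem_filter, Finset.mem_range] at hj ⊢
    have hne' : Q (i + 1) j ≠ 0 := by
      rw [hSQ.supp]; exact ⟨by omega, hj.1⟩
    have hne : Q i j ≠ 0 := hQs.2.1 i j hne'
    have hlt : j < (SQ i).card := ((hSQ.supp i j).mp hne).2
    refine ⟨hlt, ?_⟩
    have h5 := hQs.2.2.2 i j hne'
    rw [hSQ.eq i j (by omega), hSQ.eq (i + 1) j (by omega)] at h5
    omega
  have m3 : ∀ k, 1 ≤ k → k ≤ g →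
      ((Finset.range (r + 1)).filter fun i => k ∈ SQ i).card = 1 := by
    intro k h1 h2
    rw [← hSQ.ncard_val h1]
    exact hQcnt k h1 h2
  obtain ⟨hTr, hRzero⟩ := phi_isTr hd hSQ m1 m2 m3 m4
  have hBssyt : IsSSYT (psiInv g r d P) := by
    by_cases hdle : d ≤ g + r
    · rw [psiInv_of_le hdle]; exact ssyt_shift _ hP
    · rw [psiInv_of_gt hdle]; exact ssyt_addCols hP hhz
  have hBle : ∀ i j, psiInv g r d P i j ≠ 0 → psiInv g r d P i j ≤ r + 1 := by
    by_cases hdle : d ≤ g + r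
    · rw [psiInv_of_le hdle]; exact fun i j => hPle i _
    · rw [psiInv_of_gt hdle]; exact addCols_le hPle
  have hge : ∀ i, i < r + 1 → g + r - d ≤ lam i := by
    intro i hi
    rw [hlamc i hi]
    exact m4 i hi
  have hBsupp := psiInv_supp hPsupp hlg hge hd
  have hC := hSQ.phi
  have hBz : ∀ i j, r + 1 ≤ i ∨ d - r ≤ j → psiInv g r d P i j = 0 := by
    intro i j hij
    by_contra hc
    have h := (hBsupp i j).mp hc
    rcases hij with h1 | h1
    · omega
    · have := hlg i; omega
  have hcomp : ∀ i j, i < r + 1 → j < d - r →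
      (psiInv g r d P i j ≠ 0 ↔ phiMap g r Q i (d - r - 1 - j) = 0) := by
    intro i j hi hj
    rw [hBsupp i j]
    have hsupp2 := hC.supp i (d - r - 1 - j)
    have hcc := hSQ.card_compl i
    have h1 := hlg i
    have h2 := hge i hi
    have h3 := hlamc i hi
    constructor
    · rintro ⟨-, hb⟩
      by_contra hc
      have h4 := (hsupp2.mp hc).2
      rw [hcc] at h4
      omega
    · intro h0
      refine ⟨hi, ?_⟩
      by_contra hc
      have hne : phiMap g r Q i (d - r - 1 - j) ≠ 0 := by
        rw [hsupp2]
        refine ⟨hi, ?_⟩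
        rw [hcc, ← h3]
        omega
      exact hne h0
  exact ⟨⟨hBssyt, hBle, hTr, hRzero, hBz, hcomp⟩,
    psi_psiInv hP hPle hhz hfull, phi_phi hSQ⟩

end LProof
/-- The map `𝐋 = (B, R) ↦ (ψ(B), φ(R))` is a bijection from the set of
ALL L-tableaux with parameters `(g,r,d)` to the set of pairs `(P,Q)` where `P` is an
SSYT with entries in `{1, …, r+1}`, `Q` is a standard Young tableau, `P` and `Q` have
the same shape `λ` with `|λ| = g`, `λ` has height at most `r + 1`, and `λ` has at
least `g + r - d` columns of height exactly `r + 1`. -/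
theorem all_L_to_pairs_bijOn (g r d : ℕ) (hr : 1 ≤ r) (hd : r ≤ d)
    (hineq : r * g ≤ (d - r) * (r + 1)) :
    Set.BijOn
      (fun BR : (ℕ → ℕ → ℕ) × (ℕ → ℕ → ℕ) => (psi g r d BR.1, phiMap g r BR.2))
      {BR | IsLTableau g r d BR.1 BR.2}
      {PQ | IsSSYT PQ.1 ∧ (∀ i j, PQ.1 i j ≠ 0 → PQ.1 i j ≤ r + 1) ∧
        IsSYT g PQ.2 ∧ SameShape PQ.1 PQ.2 ∧ tabSize PQ.1 = g ∧
        (∀ i j, r + 1 ≤ i → PQ.1 i j = 0) ∧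
        ∀ j, j < g + r - d → PQ.1 r j ≠ 0} := by
  refine ⟨?_, ?_, ?_⟩
  · intro BR hBR
    exact (LProof.forward_full hd hBR).1
  · intro a ha b hb heq
    have h1 := LProof.forward_full hd ha
    have h2 := LProof.forward_full hd hb
    have e1 : psi g r d a.1 = psi g r d b.1 := congrArg Prod.fst heq
    have e2 : phiMap g r a.2 = phiMap g r b.2 := congrArg Prod.snd heq
    have ha1 : a.1 = b.1 := by rw [← h1.2.1, ← h2.2.1, e1]
    have ha2 : a.2 = b.2 := by rw [← h1.2.2, ← h2.2.2, e2]
    exact Prod.ext ha1 ha2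
  · intro PQ hPQ
    obtain ⟨hP, hPle, hQ, hsh, htab, hhz, hfull⟩ := hPQ
    obtain ⟨hL, e1, e2⟩ := LProof.backward_full hd hP hPle hQ hsh hhz hfull
    refine ⟨(LProof.psiInv g r d PQ.1, phiMap g r PQ.2), hL, ?_⟩
    show (psi g r d (LProof.psiInv g r d PQ.1), phiMap g r (phiMap g r PQ.2)) = PQ
    rw [e1, e2]
end

section
/- Let P be a semistandard Young tableau of shape λ with positive integer entries, and let i ≥ 1. Then P has an (i,i+1)-strip of length λ_1 (where λ_1 is the width of λ) if and only if the reading word of P has an (i,i+1)-subsequence of length λ_1. -/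
open scoped Classical

/-! ### Auxiliary lemmas for Statement 6 -/

/-- Reading-word index of box `(r, c)`: rows below come first. -/
def posIdx : List (List ℕ) → ℕ → ℕ → ℕ
  | [], _, c => c
  | _ :: rest, 0, c => (readingWord rest).length + c
  | _ :: rest, r+1, c => posIdx rest r c

lemma readingWord_cons (row : List ℕ) (rest : List (List ℕ)) :
    readingWord (row :: rest) = readingWord rest ++ row := by
  simp [readingWord]

lemma posIdx_spec : ∀ (P : List (List ℕ)) (r c : ℕ), r < P.length →
    c < (P.getD r []).length →
    posIdx P r c < (readingWord P).length ∧
      (readingWord P).getD (posIdx P r c) 0 = (P.getD r []).getD c 0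
  | [], r, c, hr, _ => by simp at hr
  | row :: rest, 0, c, hr, hc => by
      simp only [List.getD_cons_zero] at hc ⊢
      rw [readingWord_cons]
      refine ⟨by simp [posIdx]; omega, ?_⟩
      show (readingWord rest ++ row).getD ((readingWord rest).length + c) 0 = _
      rw [List.getD_append_right _ _ _ _ (by omega)]
      congr 1; omega
  | row :: rest, r+1, c, hr, hc => by
      simp only [List.getD_cons_succ] at hc ⊢
      have ih := posIdx_spec rest r c (by simpa using hr) hc
      rw [readingWord_cons]
      refine ⟨by simp [posIdx]; exact lt_of_lt_of_le ih.1 (by omega), ?_⟩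
      show (readingWord rest ++ row).getD (posIdx rest r c) 0 = _
      rw [List.getD_append _ _ _ _ ih.1]
      exact ih.2

lemma posIdx_row_lt : ∀ (P : List (List ℕ)) (r r' c c' : ℕ), r' < r → r < P.length →
    c < (P.getD r []).length → posIdx P r c < posIdx P r' c'
  | [], _, _, _, _, _, hr, _ => by simp at hr
  | row :: rest, r, 0, c, c', hrr, hr, hc => by
      obtain ⟨r0, rfl⟩ : ∃ r0, r = r0 + 1 := ⟨r - 1, by omega⟩
      show posIdx rest r0 c < (readingWord rest).length + c'
      have := (posIdx_spec rest r0 c (by simpa using hr) (by simpa using hc)).1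
      omega
  | row :: rest, r, r'+1, c, c', hrr, hr, hc => by
      obtain ⟨r0, rfl⟩ : ∃ r0, r = r0 + 1 := ⟨r - 1, by omega⟩
      exact posIdx_row_lt rest r0 r' c c' (by omega) (by simpa using hr) (by simpa using hc)

lemma posIdx_add : ∀ (P : List (List ℕ)) (r c : ℕ), posIdx P r c = posIdx P r 0 + c
  | [], _, c => by simp [posIdx]
  | row :: rest, 0, c => by simp [posIdx]
  | row :: rest, r+1, c => posIdx_add rest r c

lemma exists_box : ∀ (P : List (List ℕ)) (n : ℕ), n < (readingWord P).length →
    ∃ r c, r < P.length ∧ c < (P.getD r []).length ∧ posIdx P r c = n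
  | [], n, hn => by simp [readingWord] at hn
  | row :: rest, n, hn => by
      rw [readingWord_cons, List.length_append] at hn
      by_cases h : n < (readingWord rest).length
      · obtain ⟨r, c, h1, h2, h3⟩ := exists_box rest n h
        exact ⟨r + 1, c, by simpa using h1, by simpa using h2, h3⟩
      · refine ⟨0, n - (readingWord rest).length, by simp, by simp; omega, ?_⟩
        show (readingWord rest).length + _ = n
        omega

lemma box_valid (P : List (List ℕ)) {r c : ℕ} (h : tabFun P r c ≠ 0) :
    r < P.length ∧ c < (P.getD r []).length := by
  have hr : r < P.length := by
    by_contra hr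
    refine h ?_
    show (P.getD r []).getD c 0 = 0
    rw [List.getD_eq_default _ _ (not_lt.mp hr)]
    simp
  refine ⟨hr, ?_⟩
  by_contra hc
  exact h (List.getD_eq_default _ _ (not_lt.mp hc))

lemma row_mem (P : List (List ℕ)) {r : ℕ} (hr : r < P.length) : P.getD r [] ∈ P := by
  rw [List.getD_eq_getElem _ _ hr]; exact List.getElem_mem _

lemma entry_pos (P : List (List ℕ)) (hP : IsSSYTRows P) {r c : ℕ} (hr : r < P.length)
    (hc : c < (P.getD r []).length) : 0 < (P.getD r []).getD c 0 := by
  refine (hP.1 _ (row_mem P hr)).2.2 _ ?_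
  rw [List.getD_eq_getElem _ _ hc]; exact List.getElem_mem _

lemma row_mono (P : List (List ℕ)) (hP : IsSSYTRows P) {r c c' : ℕ} (hr : r < P.length)
    (hcc : c ≤ c') (hc' : c' < (P.getD r []).length) :
    (P.getD r []).getD c 0 ≤ (P.getD r []).getD c' 0 := by
  have hs := (hP.1 _ (row_mem P hr)).2.1
  have hc : c < (P.getD r []).length := lt_of_le_of_lt hcc hc'
  rw [List.getD_eq_getElem _ _ hc, List.getD_eq_getElem _ _ hc']
  exact hs.rel_get_of_le (a := ⟨c, hc⟩) (b := ⟨c', hc'⟩) hcc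

lemma len_anti (P : List (List ℕ)) (hP : IsSSYTRows P) : ∀ r', r' < P.length → ∀ r, r ≤ r' →
    (P.getD r' []).length ≤ (P.getD r []).length := by
  intro r'
  induction r' with
  | zero => intro _ r hr; interval_cases r; exact le_rfl
  | succ n ih =>
    intro hn r hr
    rcases Nat.eq_or_lt_of_le hr with rfl | h
    · exact le_rfl
    · exact le_trans (hP.2 n hn).1 (ih (by omega) r (by omega))

lemma col_strict (P : List (List ℕ)) (hP : IsSSYTRows P) : ∀ r', r' < P.length →
    ∀ r, r < r' → ∀ c, c < (P.getD r' []).length →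
    (P.getD r []).getD c 0 < (P.getD r' []).getD c 0 := by
  intro r'
  induction r' with
  | zero => intro _ r hr; omega
  | succ n ih =>
    intro hn r hr c hc
    rcases Nat.eq_or_lt_of_le (Nat.lt_succ_iff.mp hr) with rfl | h
    · exact (hP.2 r hn).2 c hc
    · have hcn : c < (P.getD n []).length := lt_of_lt_of_le hc (hP.2 n hn).1
      exact lt_trans (ih (by omega) r h c hcn) ((hP.2 n hn).2 c hc)


/-- A semistandard Young tableau `P` of shape `λ` has an
`(i,i+1)`-strip of length `λ₁` (the width of `λ`) if and only if its reading word has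
an `(i,i+1)`-subsequence of length `λ₁`. -/
theorem strip_iff_reading_word (P : List (List ℕ)) (hP : IsSSYTRows P) (i : ℕ)
    (hi : 1 ≤ i) :
    HasIStrip (tabFun P) i (P.getD 0 []).length ↔
      HasIISubseqL (readingWord P) i (P.getD 0 []).length := by
  constructor
  · rintro ⟨s, hs1, hs2, hs3, hs4⟩
    set L := (P.getD 0 []).length with hLdef
    have hv : ∀ k, k < L → s k < P.length ∧ k < (P.getD (s k) []).length :=
      fun k hk => box_valid P (hs1 k hk)
    set vals : Fin L → ℕ := fun k => tabFun P (s k) k with hvals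
    have hlen : (List.ofFn vals).length = L := List.length_ofFn
    refine ⟨List.ofFn vals, ?_, hlen, ?_, ?_⟩
    · rw [List.sublist_iff_exists_fin_orderEmbedding_get_eq]
      have hvv : ∀ ix : Fin (List.ofFn vals).length, (ix : ℕ) < L := by
        intro ix; exact lt_of_lt_of_eq ix.isLt hlen
      have hpos : ∀ ix : Fin (List.ofFn vals).length,
          posIdx P (s ix.val) ix.val < (readingWord P).length :=
        fun ix => (posIdx_spec P _ _ (hv ix (hvv ix)).1 (hv ix (hvv ix)).2).1
      have hmono : StrictMono (fun ix : Fin (List.ofFn vals).length =>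
          (⟨posIdx P (s ix.val) ix.val, hpos ix⟩ : Fin (readingWord P).length)) := by
        intro a b hab
        have hab' : (a : ℕ) < b := hab
        have hsle : s b ≤ s a := hs2 a b hab' (hvv b)
        simp only [Fin.mk_lt_mk]
        rcases lt_or_eq_of_le hsle with h | h
        · exact posIdx_row_lt P (s a) (s b) a b h (hv a (hvv a)).1 (hv a (hvv a)).2
        · rw [h, posIdx_add P (s a) a, posIdx_add P (s a) b]
          omega
      refine ⟨OrderEmbedding.ofStrictMono _ hmono, fun ix => ?_⟩
      have h2 := (posIdx_spec P (s ix.val) ix.val (hv ix (hvv ix)).1 (hv ix (hvv ix)).2).2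
      rw [List.getD_eq_getElem _ _ (hpos ix)] at h2
      simp only [OrderEmbedding.coe_ofStrictMono, List.get_ofFn, List.get_eq_getElem,
        List.getElem_ofFn, h2]
      rfl
    · rw [← List.sortedLE_iff_pairwise, List.sortedLE_ofFn_iff]
      intro a b hab
      rcases eq_or_lt_of_le hab with rfl | hab'
      · exact le_rfl
      · have hab'' : (a : ℕ) < b := hab'
        rcases hs3 a a.isLt with h | h
        · rcases hs3 b b.isLt with h' | h' <;> simp only [hvals] <;> omega
        · rcases hs3 b b.isLt with h' | h'
          · exact absurd (hs4 b a b.isLt a.isLt h' h) (by omega)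
          · simp only [hvals]; omega
    · intro x hx
      rw [List.mem_ofFn] at hx
      obtain ⟨k, rfl⟩ := hx
      exact hs3 k k.isLt
  · rintro ⟨sl, hsub, hlen, hsort, hmem⟩
    set L := (P.getD 0 []).length with hLdef
    rw [List.sublist_iff_exists_fin_orderEmbedding_get_eq] at hsub
    obtain ⟨f, hf⟩ := hsub
    have hbox : ∀ k : Fin sl.length, ∃ r c, r < P.length ∧ c < (P.getD r []).length ∧
        posIdx P r c = ((f k : Fin (readingWord P).length) : ℕ) :=
      fun k => exists_box P (f k) (f k).isLt
    choose R C hR hC hpos using hbox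
    have hval : ∀ k, sl.get k = (P.getD (R k) []).getD (C k) 0 := by
      intro k
      have h2 := (posIdx_spec P (R k) (C k) (hR k) (hC k)).2
      rw [hpos k] at h2
      rw [hf k, ← h2, List.getD_eq_getElem _ _ (f k).isLt, List.get_eq_getElem]
    have hCL : ∀ k, C k < L :=
      fun k => lt_of_lt_of_le (hC k) (len_anti P hP (R k) (hR k) 0 (Nat.zero_le _))
    have hsort' : ∀ k k' : Fin sl.length, k ≤ k' → sl.get k ≤ sl.get k' :=
      fun k k' h => hsort.rel_get_of_le h
    have hdec : ∀ k k' : Fin sl.length, k < k' →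
        R k' < R k ∨ (R k' = R k ∧ C k < C k') := by
      intro k k' hkk
      have hlt : posIdx P (R k) (C k) < posIdx P (R k') (C k') := by
        rw [hpos k, hpos k']; exact f.strictMono hkk
      rcases lt_trichotomy (R k) (R k') with h | h | h
      · exact absurd (posIdx_row_lt P (R k') (R k) (C k') (C k) h (hR k') (hC k')) (by omega)
      · right
        refine ⟨h.symm, ?_⟩
        rw [posIdx_add P (R k) (C k), posIdx_add P (R k') (C k'), h] at hlt
        omega
      · exact Or.inl h
    have key : ∀ a b : Fin sl.length, a < b → C a = C b → False := by
      intro a b hab hCab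
      rcases hdec a b hab with h | ⟨_, h⟩
      · have hcs := col_strict P hP (R a) (hR a) (R b) h (C a) (hC a)
        have h1 := hsort' a b (le_of_lt hab)
        rw [hval a, hval b, ← hCab] at h1
        omega
      · omega
    have hCinj : Function.Injective (fun k : Fin sl.length => (⟨C k, hCL k⟩ : Fin L)) := by
      intro k k' h
      simp only [Fin.mk.injEq] at h
      by_contra hne
      rcases lt_or_gt_of_ne hne with hlt | hlt
      · exact key k k' hlt h
      · exact key k' k hlt h.symm
    have hbij : Function.Bijective (fun k : Fin sl.length => (⟨C k, hCL k⟩ : Fin L)) := by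
      rw [Fintype.bijective_iff_injective_and_card]
      exact ⟨hCinj, by simp [hlen]⟩
    obtain ⟨K, hK⟩ : ∃ K : Fin L → Fin sl.length, ∀ j, C (K j) = (j : ℕ) := by
      obtain ⟨K, hK1, hK2⟩ := Function.bijective_iff_has_inverse.mp hbij
      exact ⟨K, fun j => congrArg Fin.val (hK2 j)⟩
    refine ⟨fun j => if h : j < L then R (K ⟨j, h⟩) else 0, ?_, ?_, ?_, ?_⟩
    · intro j hj
      simp only [dif_pos hj]
      have h := entry_pos P hP (hR (K ⟨j, hj⟩)) (hC (K ⟨j, hj⟩))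
      rw [hK ⟨j, hj⟩] at h
      have h' : 0 < (P.getD (R (K ⟨j, hj⟩)) []).getD j 0 := h
      show (P.getD (R (K ⟨j, hj⟩)) []).getD j 0 ≠ 0
      omega
    · intro j j' hjj hj'
      have hj : j < L := lt_trans hjj hj'
      simp only [dif_pos hj, dif_pos hj']
      have hCk : C (K ⟨j, hj⟩) = j := hK _
      have hCk' : C (K ⟨j', hj'⟩) = j' := hK _
      set k := K ⟨j, hj⟩
      set k' := K ⟨j', hj'⟩
      by_contra hR'
      push_neg at hR'
      have hkk : k ≠ k' := fun h => by rw [h, hCk'] at hCk; omega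
      rcases lt_or_gt_of_ne hkk with hlt | hlt
      · rcases hdec k k' hlt with h | ⟨h, _⟩ <;> omega
      · rcases hdec k' k hlt with h | ⟨_, h⟩
        · have hlen2 : (P.getD (R k') []).length ≤ (P.getD (R k) []).length :=
            len_anti P hP (R k') (hR k') (R k) (le_of_lt hR')
          have hj'k' : j' < (P.getD (R k') []).length := by rw [← hCk']; exact hC k'
          have h1 : (P.getD (R k) []).getD j 0 ≤ (P.getD (R k) []).getD j' 0 :=
            row_mono P hP (hR k) (le_of_lt hjj) (lt_of_lt_of_le hj'k' hlen2)
          have h2 : (P.getD (R k) []).getD j' 0 < (P.getD (R k') []).getD j' 0 := by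
            have hcs := col_strict P hP (R k') (hR k') (R k) hR' (C k') (hC k')
            rwa [hCk'] at hcs
          have h3 := hsort' k' k (le_of_lt hlt)
          rw [hval k, hval k', hCk, hCk'] at h3
          omega
        · rw [hCk, hCk'] at h; omega
    · intro j hj
      simp only [dif_pos hj]
      have hm := hmem (sl.get (K ⟨j, hj⟩)) (List.get_mem _ _)
      rw [hval (K ⟨j, hj⟩), hK ⟨j, hj⟩] at hm
      exact hm
    · intro j j' hj hj' hvi hvi'
      simp only [dif_pos hj] at hvi
      simp only [dif_pos hj'] at hvi'
      have hCk : C (K ⟨j, hj⟩) = j := hK _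
      have hCk' : C (K ⟨j', hj'⟩) = j' := hK _
      set k := K ⟨j, hj⟩
      set k' := K ⟨j', hj'⟩
      have hvk : sl.get k = i := by rw [hval k, hCk]; exact hvi
      have hvk' : sl.get k' = i + 1 := by rw [hval k', hCk']; exact hvi'
      have hkk : k < k' := by
        rcases lt_trichotomy k k' with h | h | h
        · exact h
        · rw [h, hvk'] at hvk; omega
        · have hss := hsort' k' k (le_of_lt h); rw [hvk, hvk'] at hss; omega
      rcases hdec k k' hkk with h | ⟨_, h⟩
      · by_contra hjj
        push_neg at hjj
        have hne : j ≠ j' := by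
          intro he
          have : k = k' := by
            apply hCinj
            apply Fin.ext
            show C k = C k'
            rw [hCk, hCk', he]
          rw [this, hvk'] at hvk; omega
        have hjj' : j' < j := lt_of_le_of_ne hjj (Ne.symm hne)
        have hjk : j < (P.getD (R k) []).length := by rw [← hCk]; exact hC k
        have hlen2 : (P.getD (R k) []).length ≤ (P.getD (R k') []).length :=
          len_anti P hP (R k) (hR k) (R k') (le_of_lt h)
        have h1 : (P.getD (R k') []).getD j' 0 ≤ (P.getD (R k') []).getD j 0 :=
          row_mono P hP (hR k') (le_of_lt hjj') (lt_of_lt_of_le hjk hlen2)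
        have h2 : (P.getD (R k') []).getD j 0 < (P.getD (R k) []).getD j 0 :=
          col_strict P hP (R k) (hR k) (R k') h j hjk
        have e1 : (P.getD (R k') []).getD j' 0 = i + 1 := hvi'
        have e2 : (P.getD (R k) []).getD j 0 = i := hvi
        omega
      · rw [hCk, hCk'] at h; exact h
end

section
/- Let ω and ν be Knuth equivalent words of positive integers, and let i ≥ 1 and ℓ ≥ 0. Then ω has an (i,i+1)-subsequence of length ℓ if and only if ν has an (i,i+1)-subsequence of length ℓ. -/
open scoped Classical

section KnuthAux

/-- A nondecreasing `{i,i+1}`-subsequence of length `ℓ` sorted means: a block of `i`s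
followed by a block of `(i+1)`s. -/
private lemma two_val (i : ℕ) : ∀ s : List ℕ, s.Pairwise (· ≤ ·) →
    (∀ x ∈ s, x = i ∨ x = i + 1) →
    s = List.replicate (s.count i) i ++ List.replicate (s.count (i + 1)) (i + 1)
  | [], _, _ => by simp
  | x :: t, hsort, hmem => by
    rcases hmem x List.mem_cons_self with hx | hx
    · subst hx
      have ih := two_val x t hsort.of_cons (fun y hy => hmem y (List.mem_cons_of_mem _ hy))
      rw [List.count_cons_self, List.count_cons_of_ne (by omega)]
      simp only [List.replicate_succ, List.cons_append]
      exact congrArg (x :: ·) ih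
    · have hall : ∀ y ∈ x :: t, y = i + 1 := by
        intro y hy
        rcases List.mem_cons.mp hy with rfl | hy'
        · exact hx
        · rcases hmem y (List.mem_cons_of_mem _ hy') with h | h
          · have := (List.pairwise_cons.mp hsort).1 y hy'
            omega
          · exact h
      have h0 : (x :: t).count i = 0 := by
        apply List.count_eq_zero_of_not_mem
        intro hmem'
        have := hall i hmem'
        omega
      have h1 : (x :: t).count (i + 1) = (x :: t).length :=
        List.count_eq_length.mpr fun b hb => (hall b hb).symm
      rw [h0, h1, List.replicate_zero, List.nil_append]
      exact List.eq_replicate_of_mem hall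

private lemma hasII_iff (w : List ℕ) (i ℓ : ℕ) :
    HasIISubseqL w i ℓ ↔ ∃ k, ℓ ≤ (w.take k).count i + (w.drop k).count (i + 1) := by
  constructor
  · rintro ⟨s, hsub, hlen, hsort, hmem⟩
    have hs := two_val i s hsort hmem
    have hcnt : s.count i + s.count (i + 1) = ℓ := by
      have := congrArg List.length hs
      simp only [List.length_append, List.length_replicate] at this
      omega
    rw [hs, List.append_sublist_iff] at hsub
    obtain ⟨r1, r2, hw, h1, h2⟩ := hsub
    refine ⟨r1.length, ?_⟩
    rw [hw, List.take_left, List.drop_left]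
    have c1 : s.count i ≤ r1.count i := by
      have := h1.count_le i
      simpa using this
    have c2 : s.count (i + 1) ≤ r2.count (i + 1) := by
      have := h2.count_le (i + 1)
      simpa using this
    omega
  · rintro ⟨k, hk⟩
    refine ⟨List.replicate (min ℓ ((w.take k).count i)) i ++
      List.replicate (ℓ - min ℓ ((w.take k).count i)) (i + 1), ?_, ?_, ?_, ?_⟩
    · have h1 : (List.replicate (min ℓ ((w.take k).count i)) i).Sublist (w.take k) :=
        (List.replicate_sublist_iff).mpr (by omega)
      have h2 : (List.replicate (ℓ - min ℓ ((w.take k).count i)) (i + 1)).Sublist (w.drop k) :=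
        (List.replicate_sublist_iff).mpr (by omega)
      have := h1.append h2
      rwa [List.take_append_drop] at this
    · simp only [List.length_append, List.length_replicate]
      omega
    · rw [List.pairwise_append]
      refine ⟨?_, ?_, ?_⟩
      · exact List.pairwise_replicate.mpr (Or.inr le_rfl)
      · exact List.pairwise_replicate.mpr (Or.inr le_rfl)
      · intro x hx y hy
        rw [List.eq_of_mem_replicate hx, List.eq_of_mem_replicate hy]
        omega
    · intro x hx
      rcases List.mem_append.mp hx with hx | hx
      · exact Or.inl (List.eq_of_mem_replicate hx)
      · exact Or.inr (List.eq_of_mem_replicate hx)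

private lemma exists_le_max4 (f : ℕ → ℕ) (x : ℕ)
    (h : x ≤ max (max (max (f 0) (f 1)) (f 2)) (f 3)) : ∃ t' ≤ 3, x ≤ f t' := by
  simp only [le_max_iff] at h
  rcases h with ((h | h) | h) | h
  exacts [⟨0, by omega, h⟩, ⟨1, by omega, h⟩, ⟨2, by omega, h⟩, ⟨3, by omega, h⟩]

private lemma key (i ℓ : ℕ) (u v m m' : List ℕ) (hm : m.length = 3) (hm' : m'.length = 3)
    (hcnt : ∀ x, m.count x = m'.count x)
    (hmid : ∀ t, t ≤ 3 → ∃ t' ≤ 3,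
      (m.take t).count i + (m.drop t).count (i + 1) ≤
        (m'.take t').count i + (m'.drop t').count (i + 1))
    (h : ∃ k, ℓ ≤ ((u ++ m ++ v).take k).count i + ((u ++ m ++ v).drop k).count (i + 1)) :
    ∃ k, ℓ ≤ ((u ++ m' ++ v).take k).count i + ((u ++ m' ++ v).drop k).count (i + 1) := by
  obtain ⟨k, hk⟩ := h
  rcases le_or_gt k u.length with hk1 | hk1
  · -- k within u : same k works
    refine ⟨k, ?_⟩
    have h0 : k - u.length = 0 := Nat.sub_eq_zero_of_le hk1
    simp only [List.append_assoc, List.take_append,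
      List.drop_append, List.count_append, h0, hm, hm', Nat.zero_sub,
      List.take_zero, List.drop_zero, List.count_nil] at hk ⊢
    have := hcnt (i + 1)
    omega
  · rcases lt_or_ge k (u.length + 3) with hk2 | hk2
    · -- k inside the window
      obtain ⟨t', ht', hle⟩ := hmid (k - u.length) (by omega)
      refine ⟨u.length + t', ?_⟩
      have e1 : k - u.length - 3 = 0 := by omega
      have e2 : u.length + t' - u.length = t' := by omega
      have e3 : t' - 3 = 0 := by omega
      simp only [List.append_assoc, List.take_append,
        List.drop_append, List.count_append, hm, hm', e1, e2, e3,
        List.take_zero, List.drop_zero, List.count_nil,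
        List.take_of_length_le (show u.length ≤ k by omega),
        List.take_of_length_le (show u.length ≤ u.length + t' by omega),
        List.drop_eq_nil_of_le (show u.length ≤ k by omega),
        List.drop_eq_nil_of_le (show u.length ≤ u.length + t' by omega)] at hk ⊢
      omega
    · -- k past the window : same k works
      refine ⟨k, ?_⟩
      simp only [List.append_assoc, List.take_append,
        List.drop_append, List.count_append, hm, hm',
        List.take_of_length_le (show m.length ≤ k - u.length by omega),
        List.take_of_length_le (show m'.length ≤ k - u.length by omega),
        List.drop_eq_nil_of_le (show m.length ≤ k - u.length by omega),
        List.drop_eq_nil_of_le (show m'.length ≤ k - u.length by omega),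
        List.count_nil] at hk ⊢
      have := hcnt i
      omega

private lemma mid_aux (i : ℕ) (m m' : List ℕ)
    (h : ∀ t ≤ 3, (m.take t).count i + (m.drop t).count (i + 1) ≤
      max (max (max ((m'.take 0).count i + (m'.drop 0).count (i + 1))
        ((m'.take 1).count i + (m'.drop 1).count (i + 1)))
        ((m'.take 2).count i + (m'.drop 2).count (i + 1)))
        ((m'.take 3).count i + (m'.drop 3).count (i + 1))) :
    ∀ t, t ≤ 3 → ∃ t' ≤ 3,
      (m.take t).count i + (m.drop t).count (i + 1) ≤
        (m'.take t').count i + (m'.drop t').count (i + 1) := fun t ht =>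
  exists_le_max4 (fun t' => (m'.take t').count i + (m'.drop t').count (i + 1)) _ (h t ht)

set_option maxHeartbeats 2000000 in
private lemma step_iff (i ℓ : ℕ) {w w' : List ℕ} (h : KnuthStep w w') :
    (∃ k, ℓ ≤ (w.take k).count i + (w.drop k).count (i + 1)) ↔
      (∃ k, ℓ ≤ (w'.take k).count i + (w'.drop k).count (i + 1)) := by
  cases h with
  | swap1 u v a b c h1 h2 =>
    have e1 : u ++ a :: c :: b :: v = u ++ [a, c, b] ++ v := by simp
    have e2 : u ++ c :: a :: b :: v = u ++ [c, a, b] ++ v := by simp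
    rw [e1, e2]
    constructor
    · refine key i ℓ u v [a, c, b] [c, a, b] rfl rfl ?_ ?_
      · intro x; simp only [List.count_cons, List.count_nil]; omega
      · apply mid_aux
        intro t ht
        interval_cases t <;>
          simp only [List.take_succ_cons, List.take_zero, List.drop_succ_cons, List.drop_zero,
            List.take_nil, List.drop_nil, List.count_cons, List.count_nil, beq_iff_eq,
            le_max_iff] <;>
          split_ifs <;> omega
    · refine key i ℓ u v [c, a, b] [a, c, b] rfl rfl ?_ ?_
      · intro x; simp only [List.count_cons, List.count_nil]; omega
      · apply mid_aux
        intro t ht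
        interval_cases t <;>
          simp only [List.take_succ_cons, List.take_zero, List.drop_succ_cons, List.drop_zero,
            List.take_nil, List.drop_nil, List.count_cons, List.count_nil, beq_iff_eq,
            le_max_iff] <;>
          split_ifs <;> omega
  | swap2 u v a b c h1 h2 =>
    have e1 : u ++ b :: a :: c :: v = u ++ [b, a, c] ++ v := by simp
    have e2 : u ++ b :: c :: a :: v = u ++ [b, c, a] ++ v := by simp
    rw [e1, e2]
    constructor
    · refine key i ℓ u v [b, a, c] [b, c, a] rfl rfl ?_ ?_
      · intro x; simp only [List.count_cons, List.count_nil]; omega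
      · apply mid_aux
        intro t ht
        interval_cases t <;>
          simp only [List.take_succ_cons, List.take_zero, List.drop_succ_cons, List.drop_zero,
            List.take_nil, List.drop_nil, List.count_cons, List.count_nil, beq_iff_eq,
            le_max_iff] <;>
          split_ifs <;> omega
    · refine key i ℓ u v [b, c, a] [b, a, c] rfl rfl ?_ ?_
      · intro x; simp only [List.count_cons, List.count_nil]; omega
      · apply mid_aux
        intro t ht
        interval_cases t <;>
          simp only [List.take_succ_cons, List.take_zero, List.drop_succ_cons, List.drop_zero,
            List.take_nil, List.drop_nil, List.count_cons, List.count_nil, beq_iff_eq,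
            le_max_iff] <;>
          split_ifs <;> omega

end KnuthAux


/-- Knuth equivalent words of positive integers have the same
`(i,i+1)`-subsequence lengths: for all `i ≥ 1` and `ℓ ≥ 0`, one has an
`(i,i+1)`-subsequence of length `ℓ` if and only if the other does. -/
theorem knuthEquiv_ii_subseq (ω ν : List ℕ) (hω : ∀ x ∈ ω, 0 < x)
    (hν : ∀ x ∈ ν, 0 < x) (h : KnuthEquiv ω ν) (i ℓ : ℕ) (hi : 1 ≤ i) :
    HasIISubseqL ω i ℓ ↔ HasIISubseqL ν i ℓ := by
  clear hω hν hi
  induction h with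
  | rel x y hxy => rw [hasII_iff, hasII_iff]; exact step_iff i ℓ hxy
  | refl x => exact Iff.rfl
  | symm x y _ ih => exact ih.symm
  | trans x y z _ _ ih1 ih2 => exact ih1.trans ih2
end
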